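/- arXiv:2401.10821 — 6 statements merged into one kernel-verified Lean document; each statement's English description precedes it below -/
import Mathlib

section
/- Let S ⊂ ℝ² be an integer distance set containing the origin and at least one other point, and let M be the smallest distance from the origin to another point of S (so M is a positive integer). Then there exist a rotation T ∈ SO₂(ℝ) and a squarefree positive integer m such that TS ⊆ {(x, y√m) : x, y ∈ (1/(2M))ℤ}. -/
private lemma nt_lemma {k k0 b m c : ℕ} (hkk : k * k0 = c ^ 2) (hk0 : k0 = b ^ 2 * m)
    (hb : b ≠ 0) (hm : Squarefree m) : ∃ t : ℕ, k = t ^ 2 * m := by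
  have hbc : b ∣ c := by
    rw [← Nat.pow_dvd_pow_iff (two_ne_zero)]
    exact Dvd.intro_left (k * m) (by rw [← hkk, hk0]; ring)
  obtain ⟨e, he⟩ := hbc
  have hkm : k * m = e ^ 2 := by
    have h2 : b ^ 2 * (k * m) = b ^ 2 * e ^ 2 := by
      calc b ^ 2 * (k * m) = k * (b ^ 2 * m) := by ring
        _ = k * k0 := by rw [hk0]
        _ = c ^ 2 := hkk
        _ = (b * e) ^ 2 := by rw [he]
        _ = b ^ 2 * e ^ 2 := by ring
    exact Nat.eq_of_mul_eq_mul_left (Nat.pos_of_ne_zero (pow_ne_zero 2 hb)) h2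
  have hme : m ∣ e := (hm.dvd_pow_iff_dvd two_ne_zero).mp ⟨k, by rw [← hkm]; ring⟩
  obtain ⟨t, ht⟩ := hme
  refine ⟨t, ?_⟩
  have h3 : m * k = m * (t ^ 2 * m) := by
    rw [show m * (t^2 * m) = (m*t)^2 by ring, ← ht, ← hkm]; ring
  exact Nat.eq_of_mul_eq_mul_left (Nat.pos_of_ne_zero hm.ne_zero) h3

private lemma rat_sq_int {q : ℚ} {n : ℕ} (h : q ^ 2 = (n : ℚ)) :
    ∃ z : ℤ, n = z.natAbs ^ 2 := by
  have hden : q.den ^ 2 = 1 := by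
    have h1 : (q ^ 2).den = 1 := by rw [h]; exact Rat.den_natCast n
    rwa [Rat.den_pow] at h1
  have hq1 : q.den = 1 := by nlinarith [q.pos]
  refine ⟨q.num, ?_⟩
  have hq : (q.num : ℚ) = q := by
    conv_rhs => rw [← Rat.num_div_den q, hq1]
    simp
  have h2 : q.num ^ 2 = (n : ℤ) := by exact_mod_cast (by push_cast [hq]; rw [h] : ((q.num ^ 2 : ℤ) : ℚ) = (n : ℚ))
  have h4 := congrArg Int.natAbs h2
  simp [Int.natAbs_pow] at h4
  exact h4.symm

private lemma dist_sq_eq (p q : EuclideanSpace ℝ (Fin 2)) :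
    dist p q ^ 2 = (p 0 - q 0) ^ 2 + (p 1 - q 1) ^ 2 := by
  rw [EuclideanSpace.dist_eq, Real.sq_sqrt (by positivity)]
  simp [Fin.sum_univ_two, Real.dist_eq, sq_abs]

private lemma mulVec0 (c s : ℝ) (v : Fin 2 → ℝ) :
    (!![c, s; -s, c]).mulVec v 0 = c * v 0 + s * v 1 := by
  simp [Matrix.mulVec, dotProduct, Fin.sum_univ_two]

private lemma mulVec1 (c s : ℝ) (v : Fin 2 → ℝ) :
    (!![c, s; -s, c]).mulVec v 1 = -s * v 0 + c * v 1 := by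
  simp [Matrix.mulVec, dotProduct, Fin.sum_univ_two]

private lemma so2_mem {c s : ℝ} (h : c ^ 2 + s ^ 2 = 1) :
    !![c, s; -s, c] ∈ Matrix.specialOrthogonalGroup (Fin 2) ℝ := by
  rw [Matrix.mem_specialOrthogonalGroup_iff]
  constructor
  · rw [Matrix.mem_orthogonalGroup_iff]
    ext i j
    fin_cases i <;> fin_cases j <;>
      simp [Matrix.mul_apply, Fin.sum_univ_two, Matrix.conjTranspose_apply, Matrix.transpose_apply, Matrix.vecHead, Matrix.vecTail] <;> nlinarith
  · rw [Matrix.det_fin_two_of]; nlinarith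

theorem stmt_1 (S : Set (EuclideanSpace ℝ (Fin 2)))
    (hdist : ∀ p ∈ S, ∀ q ∈ S, ∃ n : ℤ, dist p q = n)
    (h0 : (0 : EuclideanSpace ℝ (Fin 2)) ∈ S)
    (M : ℕ) (hMpos : 0 < M)
    (hM : IsLeast {d : ℝ | ∃ p ∈ S, p ≠ 0 ∧ d = dist p 0} M) :
    ∃ T ∈ Matrix.specialOrthogonalGroup (Fin 2) ℝ, ∃ m : ℕ, Squarefree m ∧
      ∀ p ∈ S, ∃ x y : ℤ,
        (T.mulVec (fun i => p i)) 0 = (x : ℝ) / (2 * M) ∧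
        (T.mulVec (fun i => p i)) 1 = (y : ℝ) / (2 * M) * Real.sqrt m := by
  obtain ⟨P, hPS, hPne, hPd⟩ := hM.1
  have hM0 : (0:ℝ) < (M:ℝ) := by exact_mod_cast hMpos
  have hzero : ∀ i, (0 : EuclideanSpace ℝ (Fin 2)) i = 0 := fun _ => rfl
  have hP2 : P 0 ^ 2 + P 1 ^ 2 = (M:ℝ) ^ 2 := by
    have h := dist_sq_eq P 0
    rw [← hPd] at h
    simp only [hzero, sub_zero] at h
    linarith
  set c : ℝ := P 0 / M with hc
  set s : ℝ := P 1 / M with hs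
  have hcM : (M:ℝ) * c = P 0 := by rw [hc]; field_simp
  have hsM : (M:ℝ) * s = P 1 := by rw [hs]; field_simp
  have hcs : c ^ 2 + s ^ 2 = 1 := by
    rw [hc, hs]; field_simp; linarith
  have h2M : (2 * (M:ℝ)) ≠ 0 := by positivity
  -- key facts for every point
  have key : ∀ p ∈ S, ∃ (x : ℤ) (K : ℕ),
      2 * (M:ℝ) * (c * p 0 + s * p 1) = (x:ℝ) ∧
      (2 * (M:ℝ) * (-s * p 0 + c * p 1)) ^ 2 = (K:ℝ) := by
    intro p hp
    obtain ⟨a, ha⟩ := hdist p hp 0 h0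
    obtain ⟨bq, hb⟩ := hdist p hp P hPS
    have hpa : p 0 ^ 2 + p 1 ^ 2 = (a:ℝ) ^ 2 := by
      have h := dist_sq_eq p 0
      rw [ha] at h
      simp only [hzero, sub_zero] at h
      linarith
    have hpb : (p 0 - P 0) ^ 2 + (p 1 - P 1) ^ 2 = (bq:ℝ) ^ 2 := by
      have h := dist_sq_eq p P; rw [hb] at h; linarith
    have hu0 : 2 * (M:ℝ) * (c * p 0 + s * p 1) = (a:ℝ)^2 + (M:ℝ)^2 - (bq:ℝ)^2 := by
      linear_combination 2 * p 0 * hcM + 2 * p 1 * hsM + hpa + hP2 - hpb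
    have hsum : (c * p 0 + s * p 1)^2 + (-s * p 0 + c * p 1)^2 = (a:ℝ)^2 := by
      linear_combination (p 0 ^ 2 + p 1 ^ 2) * hcs + hpa
    have hu1sq : (2 * (M:ℝ) * (-s * p 0 + c * p 1)) ^ 2
        = 4 * (M:ℝ)^2 * (a:ℝ)^2 - ((a:ℝ)^2 + (M:ℝ)^2 - (bq:ℝ)^2)^2 := by
      linear_combination 4 * (M:ℝ)^2 * hsum
        - (2 * (M:ℝ) * (c * p 0 + s * p 1) + ((a:ℝ)^2 + (M:ℝ)^2 - (bq:ℝ)^2)) * hu0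
    set kk : ℤ := 4 * (M:ℤ)^2 * a^2 - (a^2 + (M:ℤ)^2 - bq^2)^2 with hkk
    have hcast : ((kk : ℤ) : ℝ) = 4 * (M:ℝ)^2 * (a:ℝ)^2 - ((a:ℝ)^2 + (M:ℝ)^2 - (bq:ℝ)^2)^2 := by
      rw [hkk]; push_cast; ring
    have hknn : (0:ℤ) ≤ kk := by
      have h1 : (0:ℝ) ≤ (kk:ℝ) := by rw [hcast, ← hu1sq]; positivity
      exact_mod_cast h1
    refine ⟨a^2 + (M:ℤ)^2 - bq^2, kk.toNat, ?_, ?_⟩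
    · rw [hu0]; push_cast; ring
    · rw [hu1sq]
      have : ((kk.toNat : ℕ) : ℝ) = (kk : ℝ) := by exact_mod_cast Int.toNat_of_nonneg hknn
      rw [this, hcast]
  refine ⟨!![c, s; -s, c], so2_mem hcs, ?_⟩
  by_cases hall : ∀ p ∈ S, -s * p 0 + c * p 1 = 0
  · refine ⟨1, squarefree_one, ?_⟩
    intro p hp
    obtain ⟨x, K, hx, _⟩ := key p hp
    refine ⟨x, 0, ?_, ?_⟩
    · simp only [mulVec0]
      rw [eq_div_iff h2M]; linarith
    · simp only [mulVec1]
      rw [hall p hp]; simp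
  · push_neg at hall
    obtain ⟨q₀, hq₀S, hq₀⟩ := hall
    obtain ⟨x₀, K₀, hx₀, hK₀⟩ := key q₀ hq₀S
    have hK₀pos : K₀ ≠ 0 := by
      intro h
      apply hq₀
      rw [h] at hK₀
      have h2 : (2 * (M:ℝ) * (-s * q₀ 0 + c * q₀ 1)) ^ 2 = 0 := by rw [hK₀]; simp
      have h3 := (pow_eq_zero_iff two_ne_zero).mp h2
      rcases mul_eq_zero.mp h3 with h4 | h4
      · exact absurd h4 h2M
      · exact h4
    obtain ⟨m, b, hbm, hm⟩ := Nat.sq_mul_squarefree K₀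
    have hb : b ≠ 0 := by
      intro h; rw [h] at hbm; simp at hbm; exact hK₀pos hbm.symm
    refine ⟨m, hm, ?_⟩
    intro p hp
    obtain ⟨x, K, hx, hK⟩ := key p hp
    by_cases hp1 : -s * p 0 + c * p 1 = 0
    · refine ⟨x, 0, ?_, ?_⟩
      · simp only [mulVec0]; rw [eq_div_iff h2M]; linarith
      · simp only [mulVec1]; rw [hp1]; simp
    · obtain ⟨n, hn⟩ := hdist p hp q₀ hq₀S
      have hnsq : (p 0 - q₀ 0)^2 + (p 1 - q₀ 1)^2 = (n:ℝ)^2 := by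
        have h := dist_sq_eq p q₀; rw [hn] at h; linarith
      have hid : (c * p 0 + s * p 1 - (c * q₀ 0 + s * q₀ 1))^2
          + (-s * p 0 + c * p 1 - (-s * q₀ 0 + c * q₀ 1))^2 = (n:ℝ)^2 := by
        linear_combination ((p 0 - q₀ 0)^2 + (p 1 - q₀ 1)^2) * hcs + hnsq
      have hid4 : ((x:ℝ) - (x₀:ℝ))^2
          + (2 * (M:ℝ) * (-s * p 0 + c * p 1) - 2 * (M:ℝ) * (-s * q₀ 0 + c * q₀ 1))^2
          = 4 * (M:ℝ)^2 * (n:ℝ)^2 := by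
        linear_combination 4 * (M:ℝ)^2 * hid
          - (2 * (M:ℝ) * (c * p 0 + s * p 1) - 2 * (M:ℝ) * (c * q₀ 0 + s * q₀ 1)
              + (x:ℝ) - (x₀:ℝ)) * hx
          + (2 * (M:ℝ) * (c * p 0 + s * p 1) - 2 * (M:ℝ) * (c * q₀ 0 + s * q₀ 1)
              + (x:ℝ) - (x₀:ℝ)) * hx₀
      set w : ℚ := ((K:ℚ) + (K₀:ℚ) + ((x:ℚ) - (x₀:ℚ))^2 - 4 * (M:ℚ)^2 * (n:ℚ)^2) / 2 with hwdef
      have hw : (2 * (M:ℝ) * (-s * p 0 + c * p 1)) * (2 * (M:ℝ) * (-s * q₀ 0 + c * q₀ 1))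
          = (w:ℝ) := by
        rw [hwdef]; push_cast
        linear_combination (-(1:ℝ)/2) * hid4 + (1/2) * hK + (1/2) * hK₀
      have hw2 : (w:ℚ)^2 = ((K * K₀ : ℕ) : ℚ) := by
        have h1 : ((w:ℚ):ℝ)^2 = ((K * K₀ : ℕ):ℝ) := by
          rw [← hw, mul_pow, hK, hK₀]; push_cast; ring
        exact_mod_cast h1
      obtain ⟨z, hz⟩ := rat_sq_int hw2
      obtain ⟨t, ht⟩ := nt_lemma hz hbm.symm hb hm
      have hKm : (2 * (M:ℝ) * (-s * p 0 + c * p 1))^2 = ((t:ℝ) * Real.sqrt m)^2 := by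
        rw [hK, mul_pow, Real.sq_sqrt (Nat.cast_nonneg m)]
        exact_mod_cast congrArg (fun u : ℕ => (u:ℝ)) ht
      rcases sq_eq_sq_iff_eq_or_eq_neg.mp hKm with h | h
      · refine ⟨x, t, ?_, ?_⟩
        · simp only [mulVec0]; rw [eq_div_iff h2M]; linarith
        · simp only [mulVec1]
          field_simp
          linear_combination h
      · refine ⟨x, -t, ?_, ?_⟩
        · simp only [mulVec0]; rw [eq_div_iff h2M]; linarith
        · simp only [mulVec1]
          field_simp [hM0.ne']
          push_cast
          linear_combination h
end

section
/- Let Q ∈ ℂ[x,y] be a polynomial of degree d ≥ 3 with homogeneous decomposition Q = Σ_{j=0}^d Q_j, let m be a positive integer, and write the homogenization relation Q̄(∓i√m + wz, 1, z) = Σ_{j=0}^d R_{j,±}(w) z^j. Then each R_{j,±} is a polynomial in w of degree at most j, and for some 0 ≤ j ≤ d-2, at least one of R_{j,+} or R_{j,-} is not the zero polynomial. -/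
open Polynomial

noncomputable def stmt8qp (Q : MvPolynomial (Fin 2) ℂ) (j : ℕ) : Polynomial ℂ :=
  MvPolynomial.aeval ![Polynomial.X, 1] (MvPolynomial.homogeneousComponent j Q)

noncomputable def stmt8R (Q : MvPolynomial (Fin 2) ℂ) (d : ℕ) (a : ℂ) (j : ℕ) : Polynomial ℂ :=
  ∑ k ∈ Finset.range (j + 1),
    Polynomial.C ((Polynomial.taylor a (stmt8qp Q (d - j + k))).coeff k) * Polynomial.X ^ k

lemma stmt8deg2 (v : Fin 2 →₀ ℕ) : v.degree = v 0 + v 1 := by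
  rw [Finsupp.degree_apply, Finset.sum_subset (Finset.subset_univ v.support)]
  · exact Fin.sum_univ_two v
  · intro i _ hi; simpa using Finsupp.notMem_support_iff.mp hi

lemma stmt8aeval_eq_sum (P : MvPolynomial (Fin 2) ℂ) :
    MvPolynomial.aeval ![Polynomial.X, (1 : Polynomial ℂ)] P
      = ∑ v ∈ P.support, Polynomial.C (P.coeff v) * Polynomial.X ^ (v 0) := by
  conv_lhs => rw [P.as_sum, map_sum]
  refine Finset.sum_congr rfl fun v _ => ?_
  rw [MvPolynomial.aeval_monomial, Finsupp.prod_fintype _ _ (fun i => pow_zero _)]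
  simp [Fin.prod_univ_two, Polynomial.algebraMap_eq]

lemma stmt8ev (P : MvPolynomial (Fin 2) ℂ) (x : ℂ) :
    MvPolynomial.eval ![x, 1] P
      = Polynomial.eval x (MvPolynomial.aeval ![Polynomial.X, (1 : Polynomial ℂ)] P) := by
  induction P using MvPolynomial.induction_on with
  | C c => simp
  | add p q hp hq => simp [hp, hq]
  | mul_X p i hp => fin_cases i <;> simp [hp]

lemma stmt8natDegree_qp_le (Q : MvPolynomial (Fin 2) ℂ) (j : ℕ) : (stmt8qp Q j).natDegree ≤ j := by
  rw [stmt8qp, stmt8aeval_eq_sum]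
  refine Polynomial.natDegree_sum_le_of_forall_le _ _ fun v hv => ?_
  refine (Polynomial.natDegree_C_mul_le _ _).trans ?_
  rw [Polynomial.natDegree_X_pow]
  have h1 : v.degree = j := by
    by_contra h
    simp [MvPolynomial.mem_support_iff, MvPolynomial.coeff_homogeneousComponent, h] at hv
  rw [stmt8deg2] at h1
  omega

lemma stmt8coeff_qp (Q : MvPolynomial (Fin 2) ℂ) (j : ℕ) (v : Fin 2 →₀ ℕ) (hv : v.degree = j) :
    (stmt8qp Q j).coeff (v 0) = (MvPolynomial.homogeneousComponent j Q).coeff v := by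
  rw [stmt8qp, stmt8aeval_eq_sum, Polynomial.finset_sum_coeff]
  rw [Finset.sum_eq_single v]
  · simp
  · intro w hw hwv
    rw [Polynomial.coeff_C_mul, Polynomial.coeff_X_pow]
    have hwd : w.degree = j := by
      by_contra h
      simp [MvPolynomial.mem_support_iff, MvPolynomial.coeff_homogeneousComponent, h] at hw
    have h0 : w 0 ≠ v 0 := by
      intro h0
      apply hwv
      have h1 : w 1 = v 1 := by rw [stmt8deg2] at hwd hv; omega
      ext i; fin_cases i <;> assumption
    simp [Ne.symm h0]
  · intro hv'
    simp [MvPolynomial.notMem_support_iff.mp hv']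

lemma stmt8qp_ne_zero (Q : MvPolynomial (Fin 2) ℂ) (d : ℕ) (hQ : Q.totalDegree = d)
    (hQ0 : Q ≠ 0) : stmt8qp Q d ≠ 0 := by
  obtain ⟨v, hv, hvs⟩ := Finset.exists_mem_eq_sup Q.support
    (by simpa using hQ0) (fun s => s.sum fun _ e => e)
  have hvd : v.degree = d := by
    rw [← hQ, MvPolynomial.totalDegree, hvs]; rfl
  intro h0
  have := stmt8coeff_qp Q d v hvd
  rw [h0, MvPolynomial.coeff_homogeneousComponent, if_pos hvd] at this
  exact (MvPolynomial.mem_support_iff.mp hv) this.symm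

lemma stmt8coeff_R (Q : MvPolynomial (Fin 2) ℂ) (d : ℕ) (a : ℂ) (j k : ℕ) (hk : k ≤ j) :
    (stmt8R Q d a j).coeff k = (Polynomial.taylor a (stmt8qp Q (d - j + k))).coeff k := by
  rw [stmt8R, Polynomial.finset_sum_coeff]
  rw [Finset.sum_eq_single k]
  · simp
  · intro l _ hl
    rw [Polynomial.coeff_C_mul, Polynomial.coeff_X_pow]
    simp [Ne.symm hl]
  · intro h; exact absurd (Finset.mem_range.mpr (by omega)) h

lemma stmt8natDegree_R_le (Q : MvPolynomial (Fin 2) ℂ) (d : ℕ) (a : ℂ) (j : ℕ) :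
    (stmt8R Q d a j).natDegree ≤ j := by
  refine Polynomial.natDegree_sum_le_of_forall_le _ _ fun k hk => ?_
  refine (Polynomial.natDegree_C_mul_le _ _).trans ?_
  rw [Polynomial.natDegree_X_pow]
  exact Nat.lt_succ_iff.mp (Finset.mem_range.mp hk)

lemma stmt8main (Q : MvPolynomial (Fin 2) ℂ) (d : ℕ) (a w z : ℂ) :
    ∑ j ∈ Finset.range (d + 1),
        (MvPolynomial.eval ![a + w * z, 1] (MvPolynomial.homogeneousComponent j Q)) * z ^ (d - j)
      = ∑ j ∈ Finset.range (d + 1), (stmt8R Q d a j).eval w * z ^ j := by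
  have step1 : ∀ j, MvPolynomial.eval ![a + w * z, 1] (MvPolynomial.homogeneousComponent j Q)
      = ∑ k ∈ Finset.range (j + 1),
          (Polynomial.taylor a (stmt8qp Q j)).coeff k * (w * z) ^ k := by
    intro j
    rw [stmt8ev, ← stmt8qp]
    have h1 : Polynomial.eval (a + w * z) (stmt8qp Q j)
        = Polynomial.eval (w * z) (Polynomial.taylor a (stmt8qp Q j)) := by
      rw [Polynomial.taylor_eval, add_comm]
    rw [h1]
    exact Polynomial.eval_eq_sum_range'
      (lt_of_le_of_lt (by rw [Polynomial.natDegree_taylor]; exact stmt8natDegree_qp_le Q j)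
        (Nat.lt_succ_self j)) _
  have step2 : ∀ j, (stmt8R Q d a j).eval w
      = ∑ k ∈ Finset.range (j + 1),
          (Polynomial.taylor a (stmt8qp Q (d - j + k))).coeff k * w ^ k := by
    intro j; simp [stmt8R, Polynomial.eval_finset_sum]
  simp only [step1, step2, Finset.sum_mul]
  rw [Finset.sum_sigma', Finset.sum_sigma']
  refine Finset.sum_nbij' (fun p => ⟨d - p.1 + p.2, p.2⟩) (fun p => ⟨d - p.1 + p.2, p.2⟩)
    ?_ ?_ ?_ ?_ ?_
  · intro p hp
    simp only [Finset.mem_sigma, Finset.mem_range] at hp ⊢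
    omega
  · intro p hp
    simp only [Finset.mem_sigma, Finset.mem_range] at hp ⊢
    omega
  · intro p hp
    simp only [Finset.mem_sigma, Finset.mem_range] at hp
    ext <;> simp <;> omega
  · intro p hp
    simp only [Finset.mem_sigma, Finset.mem_range] at hp
    ext <;> simp <;> omega
  · intro p hp
    simp only [Finset.mem_sigma, Finset.mem_range] at hp
    have h1 : d - (d - p.1 + p.2) + p.2 = p.1 := by omega
    rw [h1, mul_pow, pow_add]
    ring

lemma stmt8div (Q : MvPolynomial (Fin 2) ℂ) (d : ℕ) (hd : 3 ≤ d) (c : ℂ)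
    (hc : ∀ j ≤ d - 2, stmt8R Q d c j = 0) :
    (Polynomial.X - Polynomial.C c) ^ (d - 1) ∣ stmt8qp Q d := by
  have h1 : Polynomial.X ^ (d - 1) ∣ Polynomial.taylor c (stmt8qp Q d) := by
    rw [Polynomial.X_pow_dvd_iff]
    intro k hk
    have h2 : (stmt8R Q d c k).coeff k = 0 := by rw [hc k (by omega)]; simp
    rw [stmt8coeff_R Q d c k k le_rfl, Nat.sub_add_cancel (by omega)] at h2
    exact h2
  obtain ⟨g, hg⟩ := h1
  refine ⟨g.comp (Polynomial.X - Polynomial.C c), ?_⟩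
  have h3 : stmt8qp Q d
      = (Polynomial.taylor c (stmt8qp Q d)).comp (Polynomial.X - Polynomial.C c) := by
    rw [Polynomial.taylor_apply, Polynomial.comp_assoc]
    simp
  rw [h3, hg, Polynomial.mul_comp, Polynomial.X_pow_comp]

theorem stmt_8 (m : ℕ) (hm : 0 < m) (d : ℕ) (hd : 3 ≤ d)
    (Q : MvPolynomial (Fin 2) ℂ) (hQ : Q.totalDegree = d) :
    ∃ Rp Rm : ℕ → Polynomial ℂ,
      (∀ w z : ℂ,
        ∑ j ∈ Finset.range (d + 1),
            (MvPolynomial.eval ![-(Complex.I * (Real.sqrt m : ℂ)) + w * z, 1]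
              (MvPolynomial.homogeneousComponent j Q)) * z ^ (d - j)
          = ∑ j ∈ Finset.range (d + 1), (Rp j).eval w * z ^ j) ∧
      (∀ w z : ℂ,
        ∑ j ∈ Finset.range (d + 1),
            (MvPolynomial.eval ![Complex.I * (Real.sqrt m : ℂ) + w * z, 1]
              (MvPolynomial.homogeneousComponent j Q)) * z ^ (d - j)
          = ∑ j ∈ Finset.range (d + 1), (Rm j).eval w * z ^ j) ∧
      (∀ j, (Rp j).natDegree ≤ j ∧ (Rm j).natDegree ≤ j) ∧
      (∃ j ≤ d - 2, Rp j ≠ 0 ∨ Rm j ≠ 0) := by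
  set a : ℂ := -(Complex.I * (Real.sqrt m : ℂ)) with ha
  set b : ℂ := Complex.I * (Real.sqrt m : ℂ) with hb
  refine ⟨stmt8R Q d a, stmt8R Q d b, fun w z => stmt8main Q d a w z,
    fun w z => stmt8main Q d b w z,
    fun j => ⟨stmt8natDegree_R_le Q d a j, stmt8natDegree_R_le Q d b j⟩, ?_⟩
  by_contra hcon
  push_neg at hcon
  have hQ0 : Q ≠ 0 := by
    intro h0
    rw [h0, MvPolynomial.totalDegree_zero] at hQ
    omega
  have hqd : stmt8qp Q d ≠ 0 := stmt8qp_ne_zero Q d hQ hQ0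
  have hda := stmt8div Q d hd a fun j hj => (hcon j hj).1
  have hdb := stmt8div Q d hd b fun j hj => (hcon j hj).2
  have hab : a ≠ b := by
    intro hE
    have hs : (Real.sqrt m : ℂ) ≠ 0 := by
      simp only [ne_eq, Complex.ofReal_eq_zero]
      exact ne_of_gt (Real.sqrt_pos.mpr (by exact_mod_cast hm))
    have h2 : (2 : ℂ) * (Complex.I * (Real.sqrt m : ℂ)) = 0 := by
      rw [ha, hb] at hE; linear_combination -hE
    have := mul_eq_zero.mp h2
    rcases this with h | h
    · norm_num at h
    · exact (mul_ne_zero Complex.I_ne_zero hs) h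
  have hco : IsCoprime (Polynomial.X - Polynomial.C a) (Polynomial.X - Polynomial.C b) :=
    Polynomial.isCoprime_X_sub_C_of_isUnit_sub (sub_ne_zero.mpr hab).isUnit
  have hdvd := (hco.pow).mul_dvd hda hdb
  have hle := Polynomial.natDegree_le_of_dvd hdvd hqd
  rw [Polynomial.natDegree_mul (pow_ne_zero _ (Polynomial.X_sub_C_ne_zero a))
      (pow_ne_zero _ (Polynomial.X_sub_C_ne_zero b)),
    Polynomial.natDegree_pow, Polynomial.natDegree_pow, Polynomial.natDegree_X_sub_C,
    Polynomial.natDegree_X_sub_C] at hle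
  have := stmt8natDegree_qp_le Q d
  omega
end

section
/- Let S ⊂ [-N,N]² be a non-collinear integer distance set. Then for every line ℓ ⊂ ℝ², the number of points of S lying on ℓ is at most O(N^{O(1/log log N)}). Specifically, if K points of S lie on ℓ, then K ≪ τ(D² q²) for a positive integer D² q² ≪ N⁴, where τ is the divisor function. -/
theorem key_factor (p a : ℕ) (hp : 2 ≤ p) (ε : ℝ) (hε : 0 < ε) (hε1 : ε ≤ 1) :
    ((a : ℝ) + 1) ≤ (if (p:ℝ) < (2:ℝ) ^ (1/ε) then 1/(ε * Real.log 2) else 1) *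
      (p:ℝ) ^ ((a:ℝ) * ε) := by
  have hl2 : 0 < Real.log 2 := Real.log_pos (by norm_num)
  have hl2' : Real.log 2 < 1 := by
    have := Real.log_two_lt_d9; linarith
  have h2p : (2:ℝ) ≤ (p:ℝ) := by exact_mod_cast hp
  have haε : 0 ≤ (a:ℝ) * ε := by positivity
  have hbase : (2:ℝ) ^ ((a:ℝ) * ε) ≤ (p:ℝ) ^ ((a:ℝ) * ε) :=
    Real.rpow_le_rpow (by norm_num) h2p haε
  split_ifs with h
  · have hexp : 1 + (a:ℝ) * ε * Real.log 2 ≤ (2:ℝ) ^ ((a:ℝ) * ε) := by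
      rw [Real.rpow_def_of_pos (by norm_num : (0:ℝ) < 2)]
      have := Real.add_one_le_exp (Real.log 2 * ((a:ℝ) * ε))
      nlinarith
    have hεl : ε * Real.log 2 ≤ 1 := by nlinarith
    rw [one_div, ← div_eq_inv_mul, le_div_iff₀ (by positivity)]
    nlinarith
  · rw [one_mul]
    have h2 : ((2:ℝ) ^ (1/ε)) ^ ((a:ℝ) * ε) ≤ (p:ℝ) ^ ((a:ℝ) * ε) :=
      Real.rpow_le_rpow (by positivity) (not_lt.mp h) haε
    have heq : ((2:ℝ) ^ (1/ε)) ^ ((a:ℝ) * ε) = (2:ℝ) ^ ((a:ℝ)) := by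
      rw [← Real.rpow_mul (by norm_num : (0:ℝ) ≤ 2)]
      congr 1; field_simp
    have ha2 : (a:ℝ) + 1 ≤ (2:ℝ) ^ ((a:ℝ)) := by
      rw [Real.rpow_natCast]
      exact_mod_cast Nat.lt_two_pow_self (n := a)
    rw [heq] at h2
    linarith

theorem tau_le_self (n : ℕ) : n.divisors.card ≤ n := by
  have h : n.divisors ⊆ Finset.Icc 1 n := fun d hd => by
    rw [Nat.mem_divisors] at hd
    exact Finset.mem_Icc.mpr ⟨(Nat.pos_of_mem_divisors (Nat.mem_divisors.mpr hd)),
      Nat.le_of_dvd (Nat.pos_of_ne_zero hd.2) hd.1⟩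
  simpa using Finset.card_le_card h


theorem tau_le_rpow (n : ℕ) (hn : n ≠ 0) (ε : ℝ) (hε : 0 < ε) (hε1 : ε ≤ 1) :
    (n.divisors.card : ℝ) ≤ (1/(ε * Real.log 2)) ^ ((2:ℝ) ^ (1/ε)) * (n:ℝ) ^ ε := by
  have hl2 : 0 < Real.log 2 := Real.log_pos (by norm_num)
  have hl2' : Real.log 2 < 1 := by have := Real.log_two_lt_d9; linarith
  have hB1 : (1:ℝ) ≤ 1/(ε * Real.log 2) := by
    rw [le_div_iff₀ (by positivity)]; nlinarith
  have hcard : (n.divisors.card : ℝ) = ∏ p ∈ n.primeFactors, ((n.factorization p : ℝ) + 1) := by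
    rw [Nat.card_divisors hn]
    push_cast
    rfl
  have hrpow : (n:ℝ) ^ ε = ∏ p ∈ n.primeFactors, (p:ℝ) ^ ((n.factorization p : ℝ) * ε) := by
    conv_lhs => rw [← Nat.factorization_prod_pow_eq_self hn]
    unfold Finsupp.prod
    rw [Nat.support_factorization]
    push_cast
    rw [← Real.finset_prod_rpow _ _ (fun p _ => by positivity) ε]
    refine Finset.prod_congr rfl fun p hp => ?_
    rw [← Real.rpow_natCast (p:ℝ) (n.factorization p), ← Real.rpow_mul (by positivity)]
  rw [hcard, hrpow]
  calc ∏ p ∈ n.primeFactors, ((n.factorization p : ℝ) + 1)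
      ≤ ∏ p ∈ n.primeFactors,
          ((if (p:ℝ) < (2:ℝ) ^ (1/ε) then 1/(ε * Real.log 2) else 1) *
            (p:ℝ) ^ ((n.factorization p : ℝ) * ε)) := by
        refine Finset.prod_le_prod (fun p _ => by positivity) (fun p hp => ?_)
        exact key_factor p _ (Nat.prime_of_mem_primeFactors hp).two_le ε hε hε1
    _ = (∏ p ∈ n.primeFactors, (if (p:ℝ) < (2:ℝ) ^ (1/ε) then 1/(ε * Real.log 2) else 1)) *
          ∏ p ∈ n.primeFactors, (p:ℝ) ^ ((n.factorization p : ℝ) * ε) :=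
        Finset.prod_mul_distrib
    _ ≤ (1/(ε * Real.log 2)) ^ ((2:ℝ) ^ (1/ε)) *
          ∏ p ∈ n.primeFactors, (p:ℝ) ^ ((n.factorization p : ℝ) * ε) := by
        refine mul_le_mul_of_nonneg_right ?_ (Finset.prod_nonneg fun p _ => by positivity)
        rw [Finset.prod_ite, Finset.prod_const, Finset.prod_const, one_pow, mul_one]
        set k := (n.primeFactors.filter fun p : ℕ => (p:ℝ) < (2:ℝ) ^ (1/ε)).card with hk
        have hkle : (k : ℝ) ≤ (2:ℝ) ^ (1/ε) := by
          have hX : (0:ℝ) ≤ (2:ℝ) ^ (1/ε) := by positivity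
          have hsub : (n.primeFactors.filter fun p : ℕ => (p:ℝ) < (2:ℝ) ^ (1/ε)) ⊆
              Finset.Icc 1 ⌊(2:ℝ) ^ (1/ε)⌋₊ := by
            intro p hp
            simp only [Finset.mem_filter] at hp
            exact Finset.mem_Icc.mpr ⟨(Nat.prime_of_mem_primeFactors hp.1).one_lt.le,
              Nat.le_floor hp.2.le⟩
          calc (k:ℝ) ≤ (⌊(2:ℝ) ^ (1/ε)⌋₊ : ℝ) := by
                exact_mod_cast le_trans (Finset.card_le_card hsub) (by simp)
            _ ≤ (2:ℝ) ^ (1/ε) := Nat.floor_le hX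
        calc (1/(ε * Real.log 2)) ^ k = (1/(ε * Real.log 2)) ^ (k:ℝ) :=
              (Real.rpow_natCast _ k).symm
          _ ≤ (1/(ε * Real.log 2)) ^ ((2:ℝ) ^ (1/ε)) :=
              Real.rpow_le_rpow_of_exponent_le hB1 hkle


set_option maxHeartbeats 1000000 in
theorem div_bound (N : ℝ) (hN : 3 ≤ N) (M : ℕ) (hM : M ≠ 0) (hMle : (M:ℝ) ≤ 324 * N^4) :
    (M.divisors.card : ℝ) ≤ Real.exp 7 * N ^ ((200:ℝ) / Real.log (Real.log N)) := by
  have hNpos : (0:ℝ) < N := by linarith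
  have hN1 : (1:ℝ) ≤ N := by linarith
  have hegt : (2.7182818283:ℝ) < Real.exp 1 := Real.exp_one_gt_d9
  have helt : Real.exp 1 < 2.7182818286 := Real.exp_one_lt_d9
  have hL : 1 < Real.log N := by
    have h3 : Real.exp 1 < N := by linarith
    calc (1:ℝ) = Real.log (Real.exp 1) := (Real.log_exp 1).symm
      _ < Real.log N := Real.log_lt_log (Real.exp_pos 1) h3
  have hLL : 0 < Real.log (Real.log N) := Real.log_pos hL
  set L := Real.log N with hLdef
  set LL := Real.log L with hLLdef
  have hexp7 : (324:ℝ) ≤ Real.exp 7 := by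
    have h1 : (2.7:ℝ) ≤ Real.exp 1 := by linarith
    have : (2.7:ℝ)^(7:ℕ) ≤ (Real.exp 1)^(7:ℕ) := by
      exact pow_le_pow_left₀ (by norm_num) h1 7
    have h2 : (Real.exp 1)^(7:ℕ) = Real.exp 7 := by
      rw [← Real.exp_nat_mul]; norm_num
    nlinarith
  have hMpos : (0:ℝ) < M := by exact_mod_cast Nat.pos_of_ne_zero hM
  have hl2 : 0 < Real.log 2 := Real.log_pos (by norm_num)
  have hl2u : Real.log 2 < 0.7 := by have := Real.log_two_lt_d9; linarith
  rcases le_or_gt LL 50 with hc | hc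
  · -- trivial regime
    have h1 : (M.divisors.card : ℝ) ≤ (M:ℝ) := by exact_mod_cast tau_le_self M
    have h2 : (324:ℝ) * N^4 ≤ Real.exp 7 * N^4 :=
      mul_le_mul_of_nonneg_right hexp7 (by positivity)
    have h3 : N^(4:ℕ) = N^((4:ℕ):ℝ) := (Real.rpow_natCast N 4).symm
    have h4 : N^((4:ℕ):ℝ) ≤ N^((200:ℝ)/LL) := by
      apply Real.rpow_le_rpow_of_exponent_le hN1
      rw [le_div_iff₀ hLL]
      push_cast
      nlinarith
    have h5 : Real.exp 7 * N^(4:ℕ) ≤ Real.exp 7 * N^((200:ℝ)/LL) := by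
      rw [h3]
      exact mul_le_mul_of_nonneg_left h4 (Real.exp_pos 7).le
    calc (M.divisors.card : ℝ) ≤ (M:ℝ) := h1
      _ ≤ 324 * N^4 := hMle
      _ ≤ Real.exp 7 * N^4 := h2
      _ ≤ Real.exp 7 * N^((200:ℝ)/LL) := h5
  · -- main regime
    have hLL1 : (1:ℝ) ≤ LL := by linarith
    have hε : (0:ℝ) < 1/LL := by positivity
    have hε1 : 1/LL ≤ 1 := by
      rw [div_le_one hLL]; linarith
    have key := tau_le_rpow M hM (1/LL) hε hε1
    have h1ε : 1/(1/LL) = LL := one_div_one_div LL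
    rw [h1ε] at key
    have hBeq : 1/((1/LL) * Real.log 2) = LL/Real.log 2 := by
      field_simp
    rw [hBeq] at key
    -- bound M^(1/LL)
    have hLpos : (0:ℝ) < L := by linarith
    have hLexp : L = Real.exp LL := (Real.exp_log hLpos).symm
    have hLbig : (51:ℝ) ≤ L := by
      have := Real.add_one_le_exp LL
      rw [← hLexp] at this
      linarith
    have hlogM : Real.log (M:ℝ) ≤ 7 * L := by
      have hlm : Real.log (M:ℝ) ≤ Real.log (324 * N^4) := Real.log_le_log hMpos hMle
      have hsplit : Real.log (324 * N^4) = Real.log 324 + 4 * L := by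
        rw [Real.log_mul (by norm_num) (by positivity), Real.log_pow]
        push_cast
        ring
      have h324 : Real.log 324 ≤ 6 := by
        have h1 : (324:ℝ) ≤ Real.exp 6 := by
          have : (2.7:ℝ)^(6:ℕ) ≤ (Real.exp 1)^(6:ℕ) := pow_le_pow_left₀ (by norm_num) (by linarith) 6
          have h2 : (Real.exp 1)^(6:ℕ) = Real.exp 6 := by rw [← Real.exp_nat_mul]; norm_num
          nlinarith
        calc Real.log 324 ≤ Real.log (Real.exp 6) := Real.log_le_log (by norm_num) h1
          _ = 6 := Real.log_exp 6
      linarith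
    have hMε : (M:ℝ)^((1:ℝ)/LL) ≤ Real.exp (7*L/LL) := by
      rw [Real.rpow_def_of_pos hMpos]
      apply Real.exp_le_exp.mpr
      rw [div_eq_mul_one_div (7*L) LL]
      have : Real.log (M:ℝ) * (1/LL) ≤ (7*L) * (1/LL) :=
        mul_le_mul_of_nonneg_right hlogM (by positivity)
      linarith
    -- bound (LL/log2)^(2^LL)
    have hBpos : (0:ℝ) < LL/Real.log 2 := by positivity
    have hlogB : Real.log (LL/Real.log 2) ≤ LL + 0.5 := by
      rw [Real.log_div (by linarith) (by linarith)]
      have hA : Real.log LL ≤ LL := by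
        have := Real.log_le_sub_one_of_pos hLL
        linarith
      have hB2 : (-0.5:ℝ) ≤ Real.log (Real.log 2) := by
        rw [Real.le_log_iff_exp_le hl2]
        have h05 : (1.5:ℝ) ≤ Real.exp 0.5 := by
          have := Real.add_one_le_exp (0.5:ℝ); linarith
        rw [show (-0.5:ℝ) = -(0.5:ℝ) by norm_num, Real.exp_neg]
        have h1 : (Real.exp (0.5:ℝ))⁻¹ ≤ (1.5:ℝ)⁻¹ := by
          apply inv_anti₀ (by norm_num) h05
        have := Real.log_two_gt_d9
        calc (Real.exp (0.5:ℝ))⁻¹ ≤ (1.5:ℝ)⁻¹ := h1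
          _ ≤ Real.log 2 := by norm_num; linarith
      linarith
    have hX : (2:ℝ)^LL = Real.exp (Real.log 2 * LL) := Real.rpow_def_of_pos (by norm_num) LL
    have hBX : (LL/Real.log 2)^((2:ℝ)^LL) ≤ Real.exp (193*L/LL) := by
      rw [Real.rpow_def_of_pos hBpos]
      apply Real.exp_le_exp.mpr
      have hXpos : (0:ℝ) < (2:ℝ)^LL := by positivity
      have step1 : Real.log (LL/Real.log 2) * (2:ℝ)^LL ≤ (LL + 0.5) * (2:ℝ)^LL :=
        mul_le_mul_of_nonneg_right hlogB hXpos.le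
      -- need (LL+0.5) * exp(log2*LL) ≤ 193*exp(LL)/LL
      have hsplit : Real.exp LL = Real.exp (Real.log 2 * LL) * Real.exp ((1 - Real.log 2) * LL) := by
        rw [← Real.exp_add]; congr 1; ring
      have hmono : Real.exp ((0.3:ℝ) * LL) ≤ Real.exp ((1 - Real.log 2) * LL) := by
        apply Real.exp_le_exp.mpr
        nlinarith
      have hquart : ((0.075:ℝ) * LL)^(4:ℕ) ≤ Real.exp ((0.3:ℝ) * LL) := by
        have h1 : Real.exp ((0.3:ℝ) * LL) = (Real.exp ((0.075:ℝ) * LL))^(4:ℕ) := by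
          rw [← Real.exp_nat_mul]; congr 1; push_cast; ring
        have h2 : (0.075:ℝ) * LL ≤ Real.exp ((0.075:ℝ) * LL) := by
          have := Real.add_one_le_exp ((0.075:ℝ) * LL); linarith
        rw [h1]
        exact pow_le_pow_left₀ (by positivity) h2 4
      have hpoly : (LL + 0.5) * LL ≤ 193 * ((0.075:ℝ) * LL)^(4:ℕ) := by
        have s1 : 2500 ≤ LL^2 := by nlinarith [hc]
        have s2 : 2500 * LL^2 ≤ LL^4 := by nlinarith [s1, sq_nonneg LL, sq_nonneg (LL^2 - 2500)]
        have s3 : ((0.075:ℝ) * LL)^(4:ℕ) = 0.000031640625 * LL^4 := by ring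
        nlinarith
      have hfinal : (LL + 0.5) * Real.exp (Real.log 2 * LL) * LL ≤ 193 * Real.exp LL := by
        rw [hsplit]
        have e1 : (0:ℝ) < Real.exp (Real.log 2 * LL) := Real.exp_pos _
        have chain : (LL + 0.5) * LL ≤ 193 * Real.exp ((1 - Real.log 2) * LL) := by
          calc (LL + 0.5) * LL ≤ 193 * ((0.075:ℝ) * LL)^(4:ℕ) := hpoly
            _ ≤ 193 * Real.exp ((0.3:ℝ) * LL) := by linarith
            _ ≤ 193 * Real.exp ((1 - Real.log 2) * LL) := by linarith
        calc (LL + 0.5) * Real.exp (Real.log 2 * LL) * LL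
            = ((LL + 0.5) * LL) * Real.exp (Real.log 2 * LL) := by ring
          _ ≤ (193 * Real.exp ((1 - Real.log 2) * LL)) * Real.exp (Real.log 2 * LL) :=
              mul_le_mul_of_nonneg_right chain e1.le
          _ = 193 * (Real.exp (Real.log 2 * LL) * Real.exp ((1 - Real.log 2) * LL)) := by ring
      rw [← hX] at hfinal
      have hdiv : (LL + 0.5) * (2:ℝ)^LL ≤ 193 * L / LL := by
        rw [le_div_iff₀ hLL, hLexp]
        linarith [hfinal]
      linarith
    -- combine
    have hprod : (LL/Real.log 2)^((2:ℝ)^LL) * (M:ℝ)^((1:ℝ)/LL) ≤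
        Real.exp (193*L/LL) * Real.exp (7*L/LL) := by
      apply mul_le_mul hBX hMε (by positivity) (Real.exp_pos _).le
    have hsum : Real.exp (193*L/LL) * Real.exp (7*L/LL) = Real.exp (200*L/LL) := by
      rw [← Real.exp_add]; congr 1; ring
    have hrhs : N^((200:ℝ)/LL) = Real.exp (200*L/LL) := by
      rw [Real.rpow_def_of_pos hNpos]
      congr 1; ring
    have h1exp : (1:ℝ) ≤ Real.exp 7 := by linarith
    calc (M.divisors.card : ℝ) ≤ (LL/Real.log 2)^((2:ℝ)^LL) * (M:ℝ)^((1:ℝ)/LL) := key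
      _ ≤ Real.exp (193*L/LL) * Real.exp (7*L/LL) := hprod
      _ = Real.exp (200*L/LL) := hsum
      _ = N^((200:ℝ)/LL) := hrhs.symm
      _ ≤ Real.exp 7 * N^((200:ℝ)/LL) :=
          le_mul_of_one_le_left (Real.rpow_pos_of_pos hNpos ((200:ℝ)/LL)).le h1exp


open RealInnerProductSpace

set_option maxHeartbeats 1000000 in
theorem stmt_10 :
    ∃ C > (0 : ℝ), ∃ c > (0 : ℝ), ∀ N : ℝ, 3 ≤ N →
      ∀ S : Set (EuclideanSpace ℝ (Fin 2)),
        (∀ p ∈ S, ∀ i, |p i| ≤ N) →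
        (∀ p ∈ S, ∀ q ∈ S, ∃ n : ℤ, dist p q = n) →
        ¬ Collinear ℝ S →
        ∀ a v : EuclideanSpace ℝ (Fin 2),
          ∀ F : Finset (EuclideanSpace ℝ (Fin 2)),
            (↑F ⊆ S ∩ {p | ∃ t : ℝ, p = a + t • v}) →
            (F.card : ℝ) ≤ C * N ^ (c / Real.log (Real.log N)) := by
  refine ⟨Real.exp 7, Real.exp_pos 7, 200, by norm_num, ?_⟩
  intro N hN S hbox hint hncol a v F hFsub
  have hNpos : (0:ℝ) < N := by linarith
  have hN1 : (1:ℝ) ≤ N := by linarith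
  have hL : 1 < Real.log N := by
    have h3 : Real.exp 1 < N := by have := Real.exp_one_lt_d9; linarith
    calc (1:ℝ) = Real.log (Real.exp 1) := (Real.log_exp 1).symm
      _ < Real.log N := Real.log_lt_log (Real.exp_pos 1) h3
  have hLL : 0 < Real.log (Real.log N) := Real.log_pos hL
  have hRHS1 : (1:ℝ) ≤ Real.exp 7 * N ^ ((200:ℝ) / Real.log (Real.log N)) := by
    have h1 : (1:ℝ) ≤ N ^ ((200:ℝ) / Real.log (Real.log N)) :=
      Real.one_le_rpow hN1 (by positivity)
    have h2 : (1:ℝ) ≤ Real.exp 7 := by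
      have := Real.add_one_le_exp (7:ℝ); linarith
    nlinarith
  by_cases hcard : F.card ≤ 1
  · calc (F.card : ℝ) ≤ 1 := by exact_mod_cast hcard
      _ ≤ _ := hRHS1
  push_neg at hcard
  obtain ⟨P0, hP0, P1, hP1, hP01⟩ := Finset.one_lt_card.mp hcard
  have hFS : ∀ p ∈ F, p ∈ S := fun p hp => (hFsub hp).1
  have hFl : ∀ p ∈ F, ∃ t : ℝ, p = a + t • v := fun p hp => (hFsub hp).2
  have hv : v ≠ 0 := by
    rintro rfl
    obtain ⟨t0, h0⟩ := hFl P0 hP0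
    obtain ⟨t1, h1⟩ := hFl P1 hP1
    simp only [smul_zero, add_zero] at h0 h1
    exact hP01 (h0.trans h1.symm)
  set u : EuclideanSpace ℝ (Fin 2) := ‖v‖⁻¹ • v with hu_def
  have hu : ‖u‖ = 1 := by
    rw [hu_def, norm_smul]; simp [norm_ne_zero_iff.mpr hv]
  set x : EuclideanSpace ℝ (Fin 2) → ℝ := fun p => ⟪p - a, u⟫ with hx_def
  have hsmul : ∀ t : ℝ, t • v = (t * ‖v‖) • u := by
    intro t
    rw [hu_def, smul_smul]
    congr 1
    have : ‖v‖ ≠ 0 := norm_ne_zero_iff.mpr hv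
    field_simp
  have hxline : ∀ t : ℝ, x (a + t • v) = t * ‖v‖ := by
    intro t
    show ⟪(a + t • v) - a, u⟫ = t * ‖v‖
    rw [add_sub_cancel_left, hsmul t, real_inner_smul_left, real_inner_self_eq_norm_sq, hu]
    ring
  have hx : ∀ p ∈ F, p = a + x p • u := by
    intro p hp
    obtain ⟨t, rfl⟩ := hFl p hp
    rw [hxline t, ← hsmul]
  have hdistF : ∀ p ∈ F, ∀ q ∈ F, dist p q = |x p - x q| := by
    intro p hp q hq
    conv_lhs => rw [hx p hp, hx q hq]
    rw [dist_eq_norm]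
    have h1 : (a + x p • u) - (a + x q • u) = (x p - x q) • u := by
      rw [sub_smul]; abel
    rw [h1, norm_smul, hu, mul_one, Real.norm_eq_abs]
  obtain ⟨Q, hQS, hQl⟩ : ∃ Q ∈ S, ∀ t : ℝ, Q ≠ a + t • v := by
    by_contra hcon
    push_neg at hcon
    refine hncol ?_
    rw [collinear_iff_exists_forall_eq_smul_vadd]
    exact ⟨a, v, fun p hp => by
      obtain ⟨t, ht⟩ := hcon p hp
      exact ⟨t, by simpa [add_comm] using ht⟩⟩
  set s0 : ℝ := ⟪Q - a, u⟫ with hs0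
  have hexpand : ∀ c : ℝ, ‖(Q - a) - c • u‖^2 = ‖Q - a‖^2 - 2*c*s0 + c^2 := by
    intro c
    rw [@norm_sub_sq_real, real_inner_smul_right, norm_smul, hu, Real.norm_eq_abs, ← hs0]
    rw [mul_one, sq_abs]
    ring
  set qs : ℝ := ‖Q - a - s0 • u‖^2 with hqs
  have hqs_eq : qs = ‖Q - a‖^2 - s0^2 := by rw [hqs, hexpand s0]; ring
  have hqs_pos : 0 < qs := by
    rw [hqs]
    have hne : Q - a - s0 • u ≠ 0 := by
      intro h
      apply hQl (s0 * ‖v‖⁻¹)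
      have hQeq : Q = a + s0 • u := by
        have h2 : Q - (a + s0 • u) = 0 := by rw [← h]; abel
        exact sub_eq_zero.mp h2
      rw [hQeq]
      congr 1
      rw [hu_def, smul_smul]
    exact pow_pos (norm_pos_iff.mpr hne) 2
  set y : EuclideanSpace ℝ (Fin 2) → ℝ := fun p => x p - s0 with hy_def
  have hb2 : ∀ p ∈ F, dist Q p ^2 = y p^2 + qs := by
    intro p hp
    rw [dist_eq_norm]
    have h1 : Q - p = (Q - a) - x p • u := by
      conv_lhs => rw [hx p hp]
      abel
    rw [h1, hexpand (x p), hqs_eq]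
    show _ = (x p - s0)^2 + _
    ring
  have hxdiff : ∀ p ∈ F, ∀ q ∈ F, ∃ k : ℤ, (k:ℝ) = x p - x q := by
    intro p hp q hq
    obtain ⟨n, hn⟩ := hint p (hFS p hp) q (hFS q hq)
    rw [hdistF p hp q hq] at hn
    rcases abs_cases (x p - x q) with ⟨h1, _⟩ | ⟨h1, _⟩
    · exact ⟨n, by rw [← hn, h1]⟩
    · refine ⟨-n, ?_⟩
      push_cast
      rw [← hn, h1]
      ring
  have hbInt : ∀ p ∈ F, ∃ n : ℤ, (n:ℝ) = dist Q p := by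
    intro p hp
    obtain ⟨n, hn⟩ := hint Q hQS p (hFS p hp)
    exact ⟨n, hn.symm⟩
  obtain ⟨δ, hδ⟩ := hxdiff P1 hP1 P0 hP0
  have hδR : (δ:ℝ) = y P1 - y P0 := by
    rw [hδ]
    show _ = (x P1 - s0) - (x P0 - s0)
    ring
  have hδ0 : δ ≠ 0 := by
    intro h
    apply hP01
    have hxeq : x P0 = x P1 := by
      rw [h] at hδ
      push_cast at hδ
      linarith
    rw [hx P0 hP0, hx P1 hP1, hxeq]
  have hδR0 : (δ:ℝ) ≠ 0 := Int.cast_ne_zero.mpr hδ0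
  obtain ⟨β0, hβ0⟩ := hbInt P0 hP0
  obtain ⟨β1, hβ1⟩ := hbInt P1 hP1
  set e0 : ℤ := β1^2 - β0^2 - δ^2 with he0def
  have he0 : (e0:ℝ) = 2*(δ:ℝ)*(y P0) := by
    have h0 := hb2 P0 hP0
    have h1 := hb2 P1 hP1
    rw [← hβ0] at h0
    rw [← hβ1] at h1
    have : (e0:ℝ) = (β1:ℝ)^2 - (β0:ℝ)^2 - (δ:ℝ)^2 := by push_cast [he0def]; ring
    rw [this, h0, h1, hδR]
    ring
  set Mz : ℤ := 4*δ^2*β0^2 - e0^2 with hMzdef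
  have hMzR : (Mz:ℝ) = 4*(δ:ℝ)^2*qs := by
    have h0 := hb2 P0 hP0
    rw [← hβ0] at h0
    have hcast : (Mz:ℝ) = 4*(δ:ℝ)^2*(β0:ℝ)^2 - (e0:ℝ)^2 := by push_cast [hMzdef]; ring
    rw [hcast, h0, he0]
    ring
  have hMzRpos : (0:ℝ) < (Mz:ℝ) := by
    rw [hMzR]; positivity
  have hMzpos : 0 < Mz := by exact_mod_cast hMzRpos
  have hMtoNat : ((Mz.toNat : ℕ) : ℝ) = (Mz:ℝ) := by
    exact_mod_cast congrArg (Int.cast : ℤ → ℝ) (Int.toNat_of_nonneg hMzpos.le)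
  -- per-point integer
  have hm : ∀ p ∈ F, ∃ m mm : ℤ, (m:ℝ) = 2*(δ:ℝ)*(dist Q p + y p) ∧
      (mm:ℝ) = 2*(δ:ℝ)*(dist Q p - y p) ∧ m * mm = Mz := by
    intro p hp
    obtain ⟨βp, hβp⟩ := hbInt p hp
    obtain ⟨k, hk⟩ := hxdiff p hp P0 hP0
    have hyk : y p = y P0 + (k:ℝ) := by
      rw [hk]
      show x p - s0 = (x P0 - s0) + (x p - x P0)
      ring
    refine ⟨2*δ*βp + (e0 + 2*δ*k), 2*δ*βp - (e0 + 2*δ*k), ?_, ?_, ?_⟩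
    · push_cast
      rw [hβp, he0, hyk]
      ring
    · push_cast
      rw [hβp, he0, hyk]
      ring
    · have hb := hb2 p hp
      rw [← hβp] at hb
      have hR : (((2*δ*βp + (e0 + 2*δ*k)) * (2*δ*βp - (e0 + 2*δ*k)) : ℤ) : ℝ) = ((Mz:ℤ):ℝ) := by
        push_cast
        rw [hMzR]
        have h2 : ((e0:ℝ) + 2*(δ:ℝ)*(k:ℝ)) = 2*(δ:ℝ)*(y p) := by
          rw [he0, hyk]; ring
        linear_combination (4*(δ:ℝ)^2) * hb - (((e0:ℝ) + 2*(δ:ℝ)*(k:ℝ)) + 2*(δ:ℝ)*(y p)) * h2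
      exact_mod_cast hR
  -- positivity of b ± y
  have hby : ∀ p ∈ F, 0 < dist Q p + y p ∧ 0 < dist Q p - y p := by
    intro p hp
    have hb := hb2 p hp
    have hd : (0:ℝ) ≤ dist Q p := dist_nonneg
    constructor <;> nlinarith [hb, hqs_pos, hd, sq_nonneg (dist Q p + y p), sq_nonneg (dist Q p - y p)]
  -- the map
  set f : EuclideanSpace ℝ (Fin 2) → ℕ := fun p => (round (2*(δ:ℝ) * (dist Q p + y p))).natAbs with hf_def
  have hfval : ∀ p ∈ F, ∀ m mm : ℤ, (m:ℝ) = 2*(δ:ℝ)*(dist Q p + y p) → f p = m.natAbs := by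
    intro p hp m mm hmR
    show (round (2*(δ:ℝ) * (dist Q p + y p))).natAbs = m.natAbs
    rw [← hmR, round_intCast]
  -- membership
  have hMtoNat0 : Mz.toNat ≠ 0 := by omega
  have hmaps : ∀ p ∈ F, f p ∈ (Mz.toNat).divisors := by
    intro p hp
    obtain ⟨m, mm, hmR, hmmR, hmul⟩ := hm p hp
    rw [hfval p hp m mm hmR]
    refine Nat.mem_divisors.mpr ⟨?_, hMtoNat0⟩
    have hdvd : m ∣ Mz := ⟨mm, hmul.symm⟩
    have h1 : m.natAbs ∣ Mz.natAbs := Int.natAbs_dvd_natAbs.mpr hdvd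
    have h2 : Mz.natAbs = Mz.toNat := by omega
    rwa [h2] at h1
  have hinj : Set.InjOn f ↑F := by
    intro p hp' q hq' hfeq
    have hp : p ∈ F := hp'
    have hq : q ∈ F := hq'
    obtain ⟨mp, mmp, hmpR, _, _⟩ := hm p hp
    obtain ⟨mq, mmq, hmqR, _, _⟩ := hm q hq
    rw [hfval p hp mp mmp hmpR, hfval q hq mq mmq hmqR] at hfeq
    have hSp := (hby p hp).1
    have hSq := (hby q hq).1
    have h2δ : (2*(δ:ℝ)) ≠ 0 := by simpa using hδR0
    have hmeq : mp = mq := by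
      rcases Int.natAbs_eq_natAbs_iff.mp hfeq with h | h
      · exact h
      · exfalso
        have hcast : (mp:ℝ) = -(mq:ℝ) := by exact_mod_cast congrArg (Int.cast : ℤ → ℝ) h
        rw [hmpR, hmqR] at hcast
        have hzero : (2*(δ:ℝ)) * ((dist Q p + y p) + (dist Q q + y q)) = 0 := by linear_combination hcast
        rcases mul_eq_zero.mp hzero with h1 | h1
        · exact h2δ h1
        · linarith
    have hSeq : dist Q p + y p = dist Q q + y q := by
      have hcast : (mp:ℝ) = (mq:ℝ) := by exact_mod_cast congrArg (Int.cast : ℤ → ℝ) hmeq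
      rw [hmpR, hmqR] at hcast
      exact mul_left_cancel₀ h2δ hcast
    have hbp := hb2 p hp
    have hbq := hb2 q hq
    have hDeq : dist Q p - y p = dist Q q - y q := by
      have h1 : (dist Q p - y p) * (dist Q p + y p) = qs := by linear_combination hbp
      have h2 : (dist Q q - y q) * (dist Q q + y q) = qs := by linear_combination hbq
      rw [hSeq] at h1
      exact mul_right_cancel₀ (by linarith : dist Q q + y q ≠ 0) (h1.trans h2.symm)
    have hyeq : y p = y q := by linarith
    have hxeq : x p = x q := by
      have : x p - s0 = x q - s0 := hyeq
      linarith
    rw [hx p hp, hx q hq, hxeq]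
  have hcardle : F.card ≤ (Mz.toNat).divisors.card :=
    Finset.card_le_card_of_injOn f hmaps hinj
  -- size bounds
  have hdistS : ∀ p ∈ S, ∀ q ∈ S, dist p q ≤ 3*N := by
    intro p hp q hq
    have h0 := abs_le.mp (hbox p hp 0)
    have h1 := abs_le.mp (hbox p hp 1)
    have h2 := abs_le.mp (hbox q hq 0)
    have h3 := abs_le.mp (hbox q hq 1)
    rw [EuclideanSpace.dist_eq, Fin.sum_univ_two]
    simp only [Real.dist_eq, sq_abs]
    have hsum : (p 0 - q 0)^2 + (p 1 - q 1)^2 ≤ (3*N)^2 := by nlinarith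
    calc Real.sqrt ((p 0 - q 0)^2 + (p 1 - q 1)^2) ≤ Real.sqrt ((3*N)^2) :=
          Real.sqrt_le_sqrt hsum
      _ = 3*N := Real.sqrt_sq (by positivity)
  have hδsq : (δ:ℝ)^2 ≤ 9*N^2 := by
    have habs : |(δ:ℝ)| ≤ 3*N := by
      rw [hδ, ← hdistF P1 hP1 P0 hP0]
      exact hdistS P1 (hFS P1 hP1) P0 (hFS P0 hP0)
    nlinarith [sq_abs (δ:ℝ), abs_nonneg (δ:ℝ)]
  have hqsle : qs ≤ 9*N^2 := by
    have hb := hb2 P0 hP0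
    have hd : dist Q P0 ≤ 3*N := hdistS Q hQS P0 (hFS P0 hP0)
    nlinarith [sq_nonneg (y P0), dist_nonneg (x := Q) (y := P0)]
  have hMle : ((Mz.toNat : ℕ) : ℝ) ≤ 324 * N^4 := by
    rw [hMtoNat, hMzR]
    nlinarith [hqs_pos, sq_nonneg (δ:ℝ), hNpos]
  calc (F.card : ℝ) ≤ ((Mz.toNat).divisors.card : ℝ) := by exact_mod_cast hcardle
    _ ≤ Real.exp 7 * N ^ ((200:ℝ) / Real.log (Real.log N)) :=
        div_bound N hN Mz.toNat hMtoNat0 hMle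
end

section
/- Let k, m₁, m₂ be positive integers with gcd(k·m₁, m₂) = 1 and m₁, m₂ squarefree, and suppose three distinct points on the circle of radius r' = k√m₁/(2√m₂) centered at the origin have pairwise integer distances e, e', e''. Then m₁ divides each of e, e', e''. -/
/-!
Put `R² = k² m₁ / (4 m₂)` for the squared radius. The circumradius formula `R = abc / (4 · area)`
(here: the vanishing of the Gram determinant of three vectors in the plane) together with
Heron's formula turns the three integer side lengths `a, b, c` into the integer
identity `k² m₁ H(a, b, c) = 4 m₂ (abc)²`, where `H = 16 · area²`. Since
`H(a, b, c) = (2bc)² - (b² + c² - a²)²`, this says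
`(k² m₁ - m₂ a²) (2bc)² = m₁ (k (b² + c² - a²))²`: the integer `k² m₁ - m₂ a²` is `m₁` times a
rational square, so the squarefree `m₁` divides it, hence divides `m₂ a²`, hence `a²`, hence `a`.
-/

open RealInnerProductSpace

/-- Sixteen times the squared area of a triangle with side lengths `a`, `b`, `c` (Heron). -/
def heron {R : Type*} [CommRing R] (a b c : R) : R :=
  2 * a ^ 2 * b ^ 2 + 2 * b ^ 2 * c ^ 2 + 2 * c ^ 2 * a ^ 2 - a ^ 4 - b ^ 4 - c ^ 4

section Heron

variable {R : Type*} [CommRing R]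

theorem heron_eq_sq_sub_sq (a b c : R) :
    heron a b c = (2 * b * c) ^ 2 - (b ^ 2 + c ^ 2 - a ^ 2) ^ 2 := by
  unfold heron; ring

theorem heron_swap (a b c : R) : heron b a c = heron a b c := by
  unfold heron; ring

theorem heron_rotate (a b c : R) : heron b c a = heron a b c := by
  unfold heron; ring

@[norm_cast]
theorem Int.cast_heron (a b c : ℤ) : ((heron a b c : ℤ) : R) = heron (a : R) b c := by
  unfold heron; push_cast; ring

end Heron

theorem Int.dvd_of_mul_sq_eq_mul_sq {m n a b : ℤ} (hm : Squarefree m) (hb : b ≠ 0)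
    (h : n * b ^ 2 = m * a ^ 2) : m ∣ n := by
  obtain ⟨g, a', b', hg, hcop, rfl, rfl⟩ :=
    Int.exists_gcd_one' (Int.gcd_pos_of_ne_zero_right a hb)
  have h' : n * b' ^ 2 = m * a' ^ 2 := by
    refine mul_right_cancel₀ (pow_ne_zero 2 (Int.natCast_ne_zero.mpr hg.ne')) ?_
    linear_combination h
  have hb' : IsUnit b' := hm b' <| by
    have hcop' : IsCoprime (b' ^ 2) (a' ^ 2) :=
      (Int.isCoprime_iff_gcd_eq_one.mpr (Int.gcd_comm a' b' ▸ hcop)).pow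
    rw [← sq]
    exact hcop'.dvd_of_dvd_mul_right ⟨n, by linear_combination -h'⟩
  obtain ⟨u, rfl⟩ := hb'
  exact ⟨a' ^ 2, by simpa [← Units.val_pow_eq_pow_val, Int.units_sq] using h'⟩

theorem Int.dvd_of_sq_mul_heron_eq {k m₁ m₂ a b c : ℤ} (hm₁ : Squarefree m₁)
    (hcop : IsCoprime m₁ m₂) (hb : b ≠ 0) (hc : c ≠ 0)
    (h : k ^ 2 * m₁ * heron a b c = 4 * m₂ * (a * b * c) ^ 2) : m₁ ∣ a := by
  rw [heron_eq_sq_sub_sq] at h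
  have hsq : (k ^ 2 * m₁ - m₂ * a ^ 2) * (2 * b * c) ^ 2
      = m₁ * (k * (b ^ 2 + c ^ 2 - a ^ 2)) ^ 2 := by
    linear_combination h
  have h₁ : m₁ ∣ k ^ 2 * m₁ - m₂ * a ^ 2 :=
    Int.dvd_of_mul_sq_eq_mul_sq hm₁ (mul_ne_zero (mul_ne_zero two_ne_zero hb) hc) hsq
  have h₂ : m₁ ∣ m₂ * a ^ 2 := (dvd_sub_right (dvd_mul_left m₁ _)).mp h₁
  exact (hm₁.dvd_pow_iff_dvd two_ne_zero).mp (hcop.dvd_of_dvd_mul_left h₂)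

theorem EuclideanSpace.det_gram_fin_two_eq_zero (P Q R : EuclideanSpace ℝ (Fin 2)) :
    !![⟪P, P⟫, ⟪P, Q⟫, ⟪P, R⟫; ⟪Q, P⟫, ⟪Q, Q⟫, ⟪Q, R⟫; ⟪R, P⟫, ⟪R, Q⟫, ⟪R, R⟫].det = 0 := by
  simp only [Matrix.det_fin_three, Matrix.of_apply, Matrix.cons_val', Matrix.cons_val_zero,
    Matrix.cons_val_fin_one, Matrix.cons_val_one, Matrix.cons_val, PiLp.inner_apply,
    RCLike.inner_apply, Fin.sum_univ_two, conj_trivial]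
  ring

theorem inner_eq_sq_sub_dist_sq_div_two {E : Type*} [NormedAddCommGroup E]
    [InnerProductSpace ℝ E] {P Q : E} {r : ℝ}
    (hP : ‖P‖ = r) (hQ : ‖Q‖ = r) : ⟪P, Q⟫ = r ^ 2 - dist P Q ^ 2 / 2 := by
  rw [dist_eq_norm, norm_sub_sq_real, hP, hQ]
  ring

theorem sq_mul_heron_dist_eq {P Q R : EuclideanSpace ℝ (Fin 2)} {r : ℝ}
    (hP : ‖P‖ = r) (hQ : ‖Q‖ = r) (hR : ‖R‖ = r) :
    r ^ 2 * heron (dist P Q) (dist P R) (dist Q R) = (dist P Q * dist P R * dist Q R) ^ 2 := by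
  have h := EuclideanSpace.det_gram_fin_two_eq_zero P Q R
  simp only [real_inner_self_eq_norm_sq, Matrix.det_fin_three, Matrix.of_apply, Matrix.cons_val',
    Matrix.cons_val_zero, Matrix.cons_val_fin_one, Matrix.cons_val_one, Matrix.cons_val] at h
  rw [real_inner_comm P Q, real_inner_comm P R, real_inner_comm Q R, hP, hQ, hR,
    inner_eq_sq_sub_dist_sq_div_two hP hQ, inner_eq_sq_sub_dist_sq_div_two hP hR,
    inner_eq_sq_sub_dist_sq_div_two hQ hR] at h
  unfold heron
  linear_combination 4 * h

theorem stmt_13_general (k m₁ m₂ : ℕ) (hm₁ : Squarefree m₁) (hm₂ : Squarefree m₂)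
    (hcop : Nat.Coprime (k * m₁) m₂)
    (P₁ P₂ P₃ : EuclideanSpace ℝ (Fin 2))
    (hr1 : ‖P₁‖ = (k : ℝ) * Real.sqrt m₁ / (2 * Real.sqrt m₂))
    (hr2 : ‖P₂‖ = (k : ℝ) * Real.sqrt m₁ / (2 * Real.sqrt m₂))
    (hr3 : ‖P₃‖ = (k : ℝ) * Real.sqrt m₁ / (2 * Real.sqrt m₂))
    (h12 : P₁ ≠ P₂) (h13 : P₁ ≠ P₃) (h23 : P₂ ≠ P₃)
    (e e' e'' : ℤ)
    (he : dist P₁ P₂ = (e : ℝ)) (he' : dist P₁ P₃ = (e' : ℝ)) (he'' : dist P₂ P₃ = (e'' : ℝ)) :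
    (m₁ : ℤ) ∣ e ∧ (m₁ : ℤ) ∣ e' ∧ (m₁ : ℤ) ∣ e'' := by
  have hm₁' : Squarefree (m₁ : ℤ) := Int.squarefree_natCast.mpr hm₁
  have hcop' : IsCoprime (m₁ : ℤ) m₂ :=
    Nat.isCoprime_iff_coprime.mpr (Nat.Coprime.coprime_dvd_left (dvd_mul_left m₁ k) hcop)
  have hradius :
      4 * (m₂ : ℝ) * ((k : ℝ) * Real.sqrt m₁ / (2 * Real.sqrt m₂)) ^ 2 = k ^ 2 * m₁ := by
    have hm₂pos : (0 : ℝ) < m₂ := by exact_mod_cast Nat.pos_of_ne_zero hm₂.ne_zero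
    rw [div_pow, mul_pow, mul_pow, Real.sq_sqrt (Nat.cast_nonneg _), Real.sq_sqrt hm₂pos.le]
    field_simp
    ring
  have he₀ : e ≠ 0 := by exact_mod_cast he ▸ dist_ne_zero.mpr h12
  have he'₀ : e' ≠ 0 := by exact_mod_cast he' ▸ dist_ne_zero.mpr h13
  have he''₀ : e'' ≠ 0 := by exact_mod_cast he'' ▸ dist_ne_zero.mpr h23
  have hreal := sq_mul_heron_dist_eq hr1 hr2 hr3
  rw [he, he', he''] at hreal
  have hint : (k : ℤ) ^ 2 * m₁ * heron e e' e'' = 4 * m₂ * (e * e' * e'') ^ 2 := by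
    have : (k : ℝ) ^ 2 * m₁ * heron (e : ℝ) e' e'' = 4 * m₂ * (e * e' * e'') ^ 2 := by
      rw [← hradius, mul_assoc, hreal]
    exact_mod_cast this
  refine ⟨Int.dvd_of_sq_mul_heron_eq hm₁' hcop' he'₀ he''₀ hint, ?_, ?_⟩
  · refine Int.dvd_of_sq_mul_heron_eq (k := k) hm₁' hcop' he₀ he''₀ ?_
    rw [heron_swap]
    linear_combination hint
  · refine Int.dvd_of_sq_mul_heron_eq (k := k) hm₁' hcop' he₀ he'₀ ?_
    rw [← heron_rotate]
    linear_combination hint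

theorem stmt_13 (k m₁ m₂ : ℕ) (hk : 0 < k) (hm₁ : Squarefree m₁) (hm₂ : Squarefree m₂)
    (hcop : Nat.Coprime (k * m₁) m₂)
    (P₁ P₂ P₃ : EuclideanSpace ℝ (Fin 2))
    (hr1 : ‖P₁‖ = (k : ℝ) * Real.sqrt m₁ / (2 * Real.sqrt m₂))
    (hr2 : ‖P₂‖ = (k : ℝ) * Real.sqrt m₁ / (2 * Real.sqrt m₂))
    (hr3 : ‖P₃‖ = (k : ℝ) * Real.sqrt m₁ / (2 * Real.sqrt m₂))
    (h12 : P₁ ≠ P₂) (h13 : P₁ ≠ P₃) (h23 : P₂ ≠ P₃)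
    (e e' e'' : ℤ)
    (he : dist P₁ P₂ = (e : ℝ)) (he' : dist P₁ P₃ = (e' : ℝ)) (he'' : dist P₂ P₃ = (e'' : ℝ)) :
    (m₁ : ℤ) ∣ e ∧ (m₁ : ℤ) ∣ e' ∧ (m₁ : ℤ) ∣ e'' :=
  stmt_13_general k m₁ m₂ hm₁ hm₂ hcop P₁ P₂ P₃ hr1 hr2 hr3 h12 h13 h23 e e' e'' he he' he''
end

section
/- Define c(r) to be the maximum size of an integer distance set contained in the circle of radius r centered at the origin. If k, m₁, m₂ ∈ ℕ with gcd(k m₁, m₂) = 1, both m₁ and m₂ squarefree, and c(k√m₁/(2√m₂)) ≥ 3, then c(k√m₁/(2√m₂)) ≤ c(k/(2√(m₁ m₂))). -/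
/-- The maximum size of an integer distance set contained in the circle of radius `r`
centered at the origin. -/
noncomputable def maxIntDistCircle (r : ℝ) : ℕ :=
  sSup {n : ℕ | ∃ S : Finset (EuclideanSpace ℝ (Fin 2)),
    (∀ p ∈ S, ‖p‖ = r) ∧ (∀ p ∈ S, ∀ q ∈ S, ∃ z : ℤ, dist p q = z) ∧ S.card = n}

namespace Stmt14Aux

lemma nt_key (k m₁ m₂ a b c : ℕ) (hk : 0 < k) (ha : 0 < a) (hb : 0 < b) (hc : 0 < c)
    (hm₁ : Squarefree m₁) (hcop : Nat.Coprime (k * m₁) m₂)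
    (heq : 4 * (a:ℤ)^2 * (b:ℤ)^2 * ((k:ℤ)^2 * (m₁:ℤ) - (m₂:ℤ) * (c:ℤ)^2)
        = (k:ℤ)^2 * (m₁:ℤ) * ((a:ℤ)^2 + (b:ℤ)^2 - (c:ℤ)^2)^2) :
    m₁ ∣ c := by
  have hm₁0 : m₁ ≠ 0 := hm₁.ne_zero
  have hc0 : c ≠ 0 := hc.ne'
  rw [← Nat.factorization_le_iff_dvd hm₁0 hc0]
  intro p
  rcases Nat.eq_zero_or_pos (m₁.factorization p) with h0 | hpos
  · simp [h0]
  have hp : p.Prime := by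
    by_contra h
    rw [Nat.factorization_eq_zero_of_not_prime _ h] at hpos
    exact absurd hpos (lt_irrefl 0)
  have hpm : p ∣ m₁ := Nat.dvd_of_factorization_pos hpos.ne'
  have hfm₁ : m₁.factorization p = 1 := le_antisymm (hm₁.natFactorization_le_one p) hpos
  have hpm₂ : ¬ p ∣ m₂ := by
    intro h
    have hg : p ∣ Nat.gcd (k * m₁) m₂ := Nat.dvd_gcd (Dvd.dvd.mul_left hpm k) h
    rw [hcop] at hg
    exact absurd (Nat.dvd_one.1 hg) hp.ne_one
  suffices hpc : p ∣ c by
    rw [hfm₁]; exact hp.factorization_pos_of_dvd hc0 hpc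
  by_contra hpc
  set w : ℤ := (k:ℤ)^2 * (m₁:ℤ) - (m₂:ℤ) * (c:ℤ)^2 with hw_def
  by_cases hw : w = 0
  · rw [hw_def] at hw
    have h1 : (k:ℤ)^2 * (m₁:ℤ) = (m₂:ℤ) * (c:ℤ)^2 := by linarith
    have h2 : k^2 * m₁ = m₂ * c^2 := by exact_mod_cast h1
    have h3 : p ∣ m₂ * c^2 := h2 ▸ Dvd.dvd.mul_left hpm (k^2)
    rcases (Nat.Prime.dvd_mul hp).1 h3 with h | h
    · exact hpm₂ h
    · exact hpc (hp.dvd_of_dvd_pow h)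
  · have hpw : ¬ (p:ℤ) ∣ w := by
      intro h
      have h2 : (p:ℤ) ∣ (m₂:ℤ) * (c:ℤ)^2 := by
        have hkm : (p:ℤ) ∣ (k:ℤ)^2 * (m₁:ℤ) := Dvd.dvd.mul_left (Int.natCast_dvd_natCast.2 hpm) _
        rw [hw_def] at h
        exact (dvd_sub_right hkm).1 h
      have h3 : p ∣ m₂ * c^2 := by exact_mod_cast h2
      rcases (Nat.Prime.dvd_mul hp).1 h3 with h | h
      · exact hpm₂ h
      · exact hpc (hp.dvd_of_dvd_pow h)
    set D : ℤ := (a:ℤ)^2 + (b:ℤ)^2 - (c:ℤ)^2 with hD_def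
    have hD : D ≠ 0 := by
      intro h
      rw [h] at heq
      have ha' : (a:ℤ) ≠ 0 := Int.natCast_ne_zero.2 ha.ne'
      have hb' : (b:ℤ) ≠ 0 := Int.natCast_ne_zero.2 hb.ne'
      simp only [ne_eq, OfNat.ofNat_ne_zero, not_false_eq_true, zero_pow, mul_zero] at heq
      rcases mul_eq_zero.1 heq with h1 | h1
      · rcases mul_eq_zero.1 h1 with h2 | h2
        · rcases mul_eq_zero.1 h2 with h3 | h3
          · norm_num at h3
          · exact pow_ne_zero 2 ha' h3
        · exact pow_ne_zero 2 hb' h2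
      · exact hw h1
    have h1 : ((2*a*b:ℕ):ℤ)^2 * w = ((k^2*m₁:ℕ):ℤ) * D^2 := by
      push_cast
      rw [hw_def, hD_def]
      linear_combination heq
    have habs := congrArg Int.natAbs h1
    simp only [Int.natAbs_mul, Int.natAbs_pow, Int.natAbs_natCast] at habs
    have hX : 2*a*b ≠ 0 := by positivity
    have hW : w.natAbs ≠ 0 := fun h => hw (Int.natAbs_eq_zero.1 h)
    have hT : D.natAbs ≠ 0 := fun h => hD (Int.natAbs_eq_zero.1 h)
    have hkm : k^2*m₁ ≠ 0 := by positivity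
    have hfact := congrArg (fun n => n.factorization p) habs
    simp only [Nat.factorization_mul (pow_ne_zero 2 hX) hW,
      Nat.factorization_mul hkm (pow_ne_zero 2 hT : D.natAbs^2 ≠ 0),
      Nat.factorization_mul (pow_ne_zero 2 hk.ne' : k^2 ≠ 0) hm₁0,
      Nat.factorization_pow, Finsupp.add_apply, Finsupp.smul_apply, smul_eq_mul] at hfact
    have hWp : w.natAbs.factorization p = 0 :=
      Nat.factorization_eq_zero_of_not_dvd
        (fun h => hpw (Int.dvd_natAbs.1 (Int.natCast_dvd_natCast.2 h)))
    rw [hfm₁, hWp] at hfact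
    omega

lemma inner_circle {E : Type*} [NormedAddCommGroup E] [InnerProductSpace ℝ E]
    (R : ℝ) (y z : E) (hy : ‖y‖ = R) (hz : ‖z‖ = R) :
    (inner ℝ y z : ℝ) = R^2 - (dist y z)^2 / 2 := by
  have h := norm_sub_sq_real y z
  rw [hy, hz, ← dist_eq_norm] at h
  linarith

lemma gram_circle (R : ℝ) (p q x : EuclideanSpace ℝ (Fin 2))
    (hp : ‖p‖ = R) (hq : ‖q‖ = R) (hx : ‖x‖ = R) :
    4 * (dist p x)^2 * (dist q x)^2 * (4*R^2 - (dist p q)^2)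
      = 4 * R^2 * ((dist p x)^2 + (dist q x)^2 - (dist p q)^2)^2 := by
  set v : Fin 3 → EuclideanSpace ℝ (Fin 2) := ![p, q, x] with hv
  have hnli : ¬ LinearIndependent ℝ v := by
    intro h
    have := h.fintype_card_le_finrank
    rw [finrank_euclideanSpace_fin] at this
    simp at this
  obtain ⟨g, hsum, i0, hi0⟩ := Fintype.not_linearIndependent_iff.1 hnli
  set M : Matrix (Fin 3) (Fin 3) ℝ := Matrix.of (fun i j => (inner ℝ (v i) (v j) : ℝ)) with hM
  have hMg : M.mulVec g = 0 := by
    funext i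
    have : (M.mulVec g) i = ∑ j, (inner ℝ (v i) (g j • v j) : ℝ) := by
      simp only [Matrix.mulVec, dotProduct, hM, Matrix.of_apply, real_inner_smul_right]
      exact Finset.sum_congr rfl fun j _ => mul_comm _ _
    rw [this, ← inner_sum, hsum, inner_zero_right]
    rfl
  have hg : g ≠ 0 := fun h => hi0 (by rw [h]; rfl)
  have hdet : M.det = 0 := Matrix.exists_mulVec_eq_zero_iff.1 ⟨g, hg, hMg⟩
  rw [Matrix.det_fin_three] at hdet
  have e0 : v 0 = p := rfl
  have e1 : v 1 = q := rfl
  have e2 : v 2 = x := rfl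
  simp only [hM, Matrix.of_apply, e0, e1, e2] at hdet
  rw [inner_circle R p p hp hp, inner_circle R p q hp hq, inner_circle R p x hp hx,
      inner_circle R q p hq hp, inner_circle R q q hq hq, inner_circle R q x hq hx,
      inner_circle R x p hx hp, inner_circle R x q hx hq, inner_circle R x x hx hx] at hdet
  simp only [dist_self] at hdet
  rw [dist_comm q p, dist_comm x p, dist_comm x q] at hdet
  linear_combination 16 * hdet

lemma key_dvd (k m₁ m₂ : ℕ) (hk : 0 < k) (hm₁ : Squarefree m₁) (hm₂ : Squarefree m₂)
    (hcop : Nat.Coprime (k * m₁) m₂) (p q x : EuclideanSpace ℝ (Fin 2))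
    (hp : ‖p‖ = (k : ℝ) * Real.sqrt m₁ / (2 * Real.sqrt m₂))
    (hq : ‖q‖ = (k : ℝ) * Real.sqrt m₁ / (2 * Real.sqrt m₂))
    (hx : ‖x‖ = (k : ℝ) * Real.sqrt m₁ / (2 * Real.sqrt m₂))
    (hpq : p ≠ q) (hxp : x ≠ p) (hxq : x ≠ q)
    (za zb zc : ℤ) (ha : dist p x = za) (hb : dist q x = zb) (hc : dist p q = zc) :
    (m₁ : ℤ) ∣ zc := by
  have hm₁0 : (0:ℝ) < m₁ := by
    have := hm₁.ne_zero; positivity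
  have hm₂0 : (0:ℝ) < m₂ := by
    have := hm₂.ne_zero; positivity
  set R : ℝ := (k : ℝ) * Real.sqrt m₁ / (2 * Real.sqrt m₂) with hR
  have hs₁ : Real.sqrt m₁ ^ 2 = m₁ := Real.sq_sqrt (le_of_lt hm₁0)
  have hs₂ : Real.sqrt m₂ ^ 2 = m₂ := Real.sq_sqrt (le_of_lt hm₂0)
  have hs₂0 : Real.sqrt m₂ ≠ 0 := by
    intro h; rw [h] at hs₂; simp at hs₂; linarith
  have hR2 : (4:ℝ) * m₂ * R^2 = (k:ℝ)^2 * m₁ := by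
    rw [hR, div_pow, mul_pow, mul_pow, hs₁, hs₂]
    field_simp
    ring
  clear_value R
  have hgram := gram_circle R p q x hp hq hx
  have hreal : 4 * (dist p x)^2 * (dist q x)^2 * ((k:ℝ)^2 * m₁ - m₂ * (dist p q)^2)
      = (k:ℝ)^2 * m₁ * ((dist p x)^2 + (dist q x)^2 - (dist p q)^2)^2 := by
    linear_combination (m₂:ℝ) * hgram
      - (4 * (dist p x)^2 * (dist q x)^2 - ((dist p x)^2 + (dist q x)^2 - (dist p q)^2)^2) * hR2
  -- convert to naturals
  have hza : 0 < za := by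
    have h1 : (0:ℝ) < dist p x := dist_pos.2 (fun h => hxp h.symm)
    rw [ha] at h1; exact_mod_cast h1
  have hzb : 0 < zb := by
    have h1 : (0:ℝ) < dist q x := dist_pos.2 (fun h => hxq h.symm)
    rw [hb] at h1; exact_mod_cast h1
  have hzc : 0 < zc := by
    have h1 : (0:ℝ) < dist p q := dist_pos.2 hpq
    rw [hc] at h1; exact_mod_cast h1
  set na := za.toNat with hna_def
  set nb := zb.toNat with hnb_def
  set nc := zc.toNat with hnc_def
  have hna : (na:ℤ) = za := Int.toNat_of_nonneg hza.le
  have hnb : (nb:ℤ) = zb := Int.toNat_of_nonneg hzb.le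
  have hnc : (nc:ℤ) = zc := Int.toNat_of_nonneg hzc.le
  have hna' : (na:ℝ) = dist p x := by rw [ha]; exact_mod_cast congrArg (Int.cast : ℤ → ℝ) hna
  have hnb' : (nb:ℝ) = dist q x := by rw [hb]; exact_mod_cast congrArg (Int.cast : ℤ → ℝ) hnb
  have hnc' : (nc:ℝ) = dist p q := by rw [hc]; exact_mod_cast congrArg (Int.cast : ℤ → ℝ) hnc
  have heqZ : 4 * (na:ℤ)^2 * (nb:ℤ)^2 * ((k:ℤ)^2 * (m₁:ℤ) - (m₂:ℤ) * (nc:ℤ)^2)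
      = (k:ℤ)^2 * (m₁:ℤ) * ((na:ℤ)^2 + (nb:ℤ)^2 - (nc:ℤ)^2)^2 := by
    have hrr : 4 * ((na:ℝ))^2 * ((nb:ℝ))^2 * ((k:ℝ)^2 * (m₁:ℝ) - (m₂:ℝ) * ((nc:ℝ))^2)
        = (k:ℝ)^2 * (m₁:ℝ) * (((na:ℝ))^2 + ((nb:ℝ))^2 - ((nc:ℝ))^2)^2 := by
      rw [hna', hnb', hnc']
      linear_combination hreal
    exact_mod_cast hrr
  have hdvd : m₁ ∣ nc := by
    refine nt_key k m₁ m₂ na nb nc hk ?_ ?_ ?_ hm₁ hcop heqZ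
    · exact_mod_cast hna ▸ hza
    · exact_mod_cast hnb ▸ hzb
    · exact_mod_cast hnc ▸ hzc
  rw [← hnc]
  exact_mod_cast hdvd

end Stmt14Aux

open Stmt14Aux

theorem stmt_14 (k m₁ m₂ : ℕ) (hk : 0 < k) (hm₁ : Squarefree m₁) (hm₂ : Squarefree m₂)
    (hcop : Nat.Coprime (k * m₁) m₂)
    (h3 : 3 ≤ maxIntDistCircle ((k : ℝ) * Real.sqrt m₁ / (2 * Real.sqrt m₂))) :
    maxIntDistCircle ((k : ℝ) * Real.sqrt m₁ / (2 * Real.sqrt m₂)) ≤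
      maxIntDistCircle ((k : ℝ) / (2 * Real.sqrt (m₁ * m₂))) := by
  classical
  have hm₁0 : (0:ℝ) < m₁ := by have := hm₁.ne_zero; positivity
  have hm₂0 : (0:ℝ) < m₂ := by have := hm₂.ne_zero; positivity
  set r₁ : ℝ := (k : ℝ) * Real.sqrt m₁ / (2 * Real.sqrt m₂) with hr₁
  set r₂ : ℝ := (k : ℝ) / (2 * Real.sqrt (m₁ * m₂)) with hr₂
  have hs₁ : Real.sqrt m₁ ^ 2 = m₁ := Real.sq_sqrt hm₁0.le
  have hs₂ : Real.sqrt m₂ ^ 2 = m₂ := Real.sq_sqrt hm₂0.le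
  have hs₁0 : (0:ℝ) < Real.sqrt m₁ := Real.sqrt_pos.2 hm₁0
  have hs₂0 : (0:ℝ) < Real.sqrt m₂ := Real.sqrt_pos.2 hm₂0
  have hsmul : Real.sqrt ((m₁:ℝ) * (m₂:ℝ)) = Real.sqrt m₁ * Real.sqrt m₂ :=
    Real.sqrt_mul hm₁0.le _
  have hscale : (m₁ : ℝ) * r₂ = r₁ := by
    rw [hr₁, hr₂, hsmul]
    field_simp
    linear_combination (-1:ℝ) * hs₁
  have hscale' : (m₁ : ℝ)⁻¹ * r₁ = r₂ := by
    rw [← hscale]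
    field_simp
  set A : Set ℕ := {n : ℕ | ∃ S : Finset (EuclideanSpace ℝ (Fin 2)),
    (∀ p ∈ S, ‖p‖ = r₁) ∧ (∀ p ∈ S, ∀ q ∈ S, ∃ z : ℤ, dist p q = z) ∧ S.card = n} with hA
  set B : Set ℕ := {n : ℕ | ∃ S : Finset (EuclideanSpace ℝ (Fin 2)),
    (∀ p ∈ S, ‖p‖ = r₂) ∧ (∀ p ∈ S, ∀ q ∈ S, ∃ z : ℤ, dist p q = z) ∧ S.card = n} with hB
  have hmax₁ : maxIntDistCircle r₁ = sSup A := rfl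
  have hmax₂ : maxIntDistCircle r₂ = sSup B := rfl
  -- every size achievable for r₂ is achievable for r₁ (scale up by m₁)
  have hBA : B ⊆ A := by
    rintro n ⟨S, hnorm, hdist, hcard⟩
    have hm₁ne : (m₁:ℝ) ≠ 0 := ne_of_gt hm₁0
    have hinj : Function.Injective (fun y : EuclideanSpace ℝ (Fin 2) => (m₁:ℝ) • y) :=
      smul_right_injective _ hm₁ne
    refine ⟨S.image (fun y => (m₁:ℝ) • y), ?_, ?_, ?_⟩
    · intro p hp
      obtain ⟨y, hy, rfl⟩ := Finset.mem_image.1 hp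
      rw [norm_smul, hnorm y hy, Real.norm_of_nonneg hm₁0.le, hscale]
    · intro p hp q hq
      obtain ⟨y, hy, rfl⟩ := Finset.mem_image.1 hp
      obtain ⟨y', hy', rfl⟩ := Finset.mem_image.1 hq
      obtain ⟨z, hz⟩ := hdist y hy y' hy'
      refine ⟨m₁ * z, ?_⟩
      rw [dist_smul₀, hz, Real.norm_of_nonneg hm₁0.le]
      push_cast
      ring
    · rw [Finset.card_image_of_injective _ hinj, hcard]
  -- A is nonempty and bounded above
  have hA_bdd : BddAbove A := by
    by_contra h
    rw [hmax₁, csSup_of_not_bddAbove h, csSup_empty] at h3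
    simp at h3
  have hA_ne : A.Nonempty := by
    by_contra h
    rw [Set.not_nonempty_iff_eq_empty] at h
    rw [hmax₁, h, csSup_empty] at h3
    simp at h3
  have hB_bdd : BddAbove B := hA_bdd.mono hBA
  -- extract a maximal witness
  obtain ⟨S, hSnorm, hSdist, hScard⟩ := Nat.sSup_mem hA_ne hA_bdd
  have hScard3 : 3 ≤ S.card := by rw [hScard]; exact hmax₁ ▸ h3
  rw [hmax₁, hmax₂, ← hScard]
  -- all pairwise distances in S are divisible by m₁
  have hdvd : ∀ p ∈ S, ∀ q ∈ S, ∃ z : ℤ, dist p q = (m₁:ℝ) * z := by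
    intro p hp q hq
    by_cases hpq : p = q
    · exact ⟨0, by simp [hpq]⟩
    · -- find a third point
      have hcard2 : 0 < ((S.erase p).erase q).card := by
        have h1 : q ∈ S.erase p := Finset.mem_erase.2 ⟨fun h => hpq h.symm, hq⟩
        have h2 := Finset.card_erase_of_mem h1
        have h3 := Finset.card_erase_of_mem hp
        omega
      obtain ⟨x, hxmem⟩ := Finset.card_pos.1 hcard2
      obtain ⟨hxq, hx'⟩ := Finset.mem_erase.1 hxmem
      obtain ⟨hxp, hxS⟩ := Finset.mem_erase.1 hx'
      obtain ⟨za, ha⟩ := hSdist p hp x hxS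
      obtain ⟨zb, hb⟩ := hSdist q hq x hxS
      obtain ⟨zc, hc⟩ := hSdist p hp q hq
      have hdd := key_dvd k m₁ m₂ hk hm₁ hm₂ hcop p q x
        (hSnorm p hp) (hSnorm q hq) (hSnorm x hxS) hpq hxp hxq za zb zc ha hb hc
      obtain ⟨z', hz'⟩ := hdd
      refine ⟨z', ?_⟩
      rw [hc, hz']
      push_cast
      ring
  -- scale down by m₁
  refine le_csSup hB_bdd ?_
  have hm₁ne : (m₁:ℝ)⁻¹ ≠ 0 := by positivity
  have hinj : Function.Injective (fun y : EuclideanSpace ℝ (Fin 2) => (m₁:ℝ)⁻¹ • y) :=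
    smul_right_injective _ hm₁ne
  refine ⟨S.image (fun y => (m₁:ℝ)⁻¹ • y), ?_, ?_, ?_⟩
  · intro p hp
    obtain ⟨y, hy, rfl⟩ := Finset.mem_image.1 hp
    rw [norm_smul, hSnorm y hy, Real.norm_of_nonneg (by positivity : (0:ℝ) ≤ (m₁:ℝ)⁻¹), hscale']
  · intro p hp q hq
    obtain ⟨y, hy, rfl⟩ := Finset.mem_image.1 hp
    obtain ⟨y', hy', rfl⟩ := Finset.mem_image.1 hq
    obtain ⟨z, hz⟩ := hdvd y hy y' hy'
    refine ⟨z, ?_⟩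
    rw [dist_smul₀, hz, Real.norm_of_nonneg (by positivity : (0:ℝ) ≤ (m₁:ℝ)⁻¹)]
    field_simp
  · rw [Finset.card_image_of_injective _ hinj]
end

section
/- Let a, m, n₁, n₂, D be integers with D squarefree, n = n₁n₂, every prime dividing n₁ having (-D/p) = -1, and suppose -D a² = m² - (n₁ n₂)². Then n₁ divides both a and m. -/
theorem aux_16 (D : ℤ) (n₂ : ℕ) : ∀ n₁ : ℕ, 0 < n₁ → ∀ a m : ℤ,
    IsCoprime ((n₁ * n₂ : ℕ) : ℤ) D →
    (∀ p : ℕ, (hp : p.Prime) → p ∣ n₁ → @legendreSym p ⟨hp⟩ (-D) = -1) →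
    -D * a ^ 2 = m ^ 2 - ((n₁ * n₂ : ℕ) : ℤ) ^ 2 →
    (n₁ : ℤ) ∣ a ∧ (n₁ : ℤ) ∣ m := by
  intro n₁
  induction n₁ using Nat.strong_induction_on with
  | _ n₁ ih =>
  intro hn₁ a m hcop hleg heq
  rcases eq_or_lt_of_le (show 1 ≤ n₁ from hn₁) with h1 | h1
  · simp [← h1]
  · obtain ⟨p, hp, hpd⟩ := Nat.exists_prime_and_dvd (by omega : n₁ ≠ 1)
    haveI hF : Fact p.Prime := ⟨hp⟩
    have hleg_p := hleg p hp hpd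
    have hnsq : ¬ IsSquare ((-D : ℤ) : ZMod p) :=
      (legendreSym.eq_neg_one_iff p).mp hleg_p
    have hN0 : ((n₁ * n₂ : ℕ) : ZMod p) = 0 := by
      rw [ZMod.natCast_eq_zero_iff]
      exact dvd_mul_of_dvd_left hpd n₂
    have hmodeq : ((-D : ℤ) : ZMod p) * (a : ZMod p) ^ 2 = (m : ZMod p) ^ 2 := by
      have := congrArg (fun z : ℤ => (z : ZMod p)) heq
      push_cast at this ⊢
      push_cast at hN0
      rw [hN0] at this
      push_cast
      linear_combination this
    have hA0 : (a : ZMod p) = 0 := by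
      by_contra hA
      apply hnsq
      refine ⟨(m : ZMod p) * (a : ZMod p)⁻¹, ?_⟩
      field_simp
      push_cast at hmodeq ⊢
      linear_combination hmodeq
    have hpa : (p : ℤ) ∣ a := by
      rwa [← ZMod.intCast_zmod_eq_zero_iff_dvd]
    have hpm : (p : ℤ) ∣ m := by
      rw [← ZMod.intCast_zmod_eq_zero_iff_dvd]
      have : ((m : ZMod p)) ^ 2 = 0 := by rw [← hmodeq, hA0]; ring
      exact pow_eq_zero_iff (n := 2) (by norm_num) |>.mp this
    obtain ⟨a', rfl⟩ := hpa
    obtain ⟨m', rfl⟩ := hpm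
    obtain ⟨n₁', rfl⟩ := hpd
    have hp0 : (p : ℤ) ≠ 0 := by exact_mod_cast hp.ne_zero
    have heq' : -D * a' ^ 2 = m' ^ 2 - ((n₁' * n₂ : ℕ) : ℤ) ^ 2 := by
      have h2 : (p : ℤ) ^ 2 * (-D * a' ^ 2) =
          (p : ℤ) ^ 2 * (m' ^ 2 - ((n₁' * n₂ : ℕ) : ℤ) ^ 2) := by
        push_cast at heq ⊢
        linear_combination heq
      exact mul_left_cancel₀ (pow_ne_zero 2 hp0) h2
    have hn₁' : 0 < n₁' := Nat.pos_of_ne_zero (fun h => by simp [h] at hn₁)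
    have hlt : n₁' < p * n₁' := by
      have := hp.two_le; nlinarith
    have hcop' : IsCoprime ((n₁' * n₂ : ℕ) : ℤ) D := by
      apply IsCoprime.of_isCoprime_of_dvd_left hcop
      push_cast
      exact ⟨p, by ring⟩
    have hleg' : ∀ q : ℕ, (hq : q.Prime) → q ∣ n₁' → @legendreSym q ⟨hq⟩ (-D) = -1 :=
      fun q hq hqd => hleg q hq (hqd.mul_left p)
    obtain ⟨ha', hm'⟩ := ih n₁' hlt hn₁' a' m' hcop' hleg' heq'
    constructor
    · push_cast; exact mul_dvd_mul_left (p : ℤ) ha'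
    · push_cast; exact mul_dvd_mul_left (p : ℤ) hm'

theorem stmt_16 (a m : ℤ) (n₁ n₂ : ℕ) (D : ℤ) (hD : Squarefree D)
    (hn₁ : 0 < n₁) (hn₂ : 0 < n₂)
    (hcop : IsCoprime ((n₁ * n₂ : ℕ) : ℤ) D)
    (hleg : ∀ p : ℕ, (hp : p.Prime) → p ∣ n₁ → @legendreSym p ⟨hp⟩ (-D) = -1)
    (heq : -D * a ^ 2 = m ^ 2 - ((n₁ * n₂ : ℕ) : ℤ) ^ 2) :
    (n₁ : ℤ) ∣ a ∧ (n₁ : ℤ) ∣ m :=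
  aux_16 D n₂ n₁ hn₁ a m hcop hleg heq
end
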